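/- arXiv:1907.01859 — 13 statements merged into one kernel-verified Lean document; each statement's English description precedes it below -/
import Mathlib

section
/- Let Γ be a linearly ordered abelian group and Δ a subgroup of Γ. If the initial index ε(Γ|Δ) satisfies 1 < ε(Γ|Δ) < ∞, then the set of strictly positive elements of Γ has a minimum γ₁; consequently every element γ of Γ with 0 ≤ γ ≤ n·γ₁ for some natural number n is an integer multiple of γ₁, so the subgroup ℤ·γ₁ is a convex subgroup of Γ isomorphic to ℤ (it is the smallest nonzero convex subgroup of Γ). -/
/-- If the initial index of a subgroup `Δ` of a linearly ordered abelian
group `Γ` satisfies `1 < ε(Γ|Δ) < ∞`, then the set of strictly positive elements of `Γ`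
has a minimum `γ₁`; every `γ ∈ Γ` with `0 ≤ γ ≤ n • γ₁` for some `n : ℕ` is an integer
multiple of `γ₁`; hence `ℤ·γ₁` is a convex subgroup of `Γ` isomorphic to `ℤ`, and it is
the smallest nonzero convex subgroup of `Γ`. -/
theorem stmt0 (Γ : Type*) [AddCommGroup Γ] [LinearOrder Γ] [IsOrderedAddMonoid Γ] (Δ : AddSubgroup Γ)
    (hfin : ({γ : Γ | 0 ≤ γ ∧ ∀ δ ∈ Δ, 0 < δ → γ < δ}).Finite)
    (hone : 1 < ({γ : Γ | 0 ≤ γ ∧ ∀ δ ∈ Δ, 0 < δ → γ < δ}).ncard) :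
    ∃ γ₁ : Γ, IsLeast {γ : Γ | 0 < γ} γ₁ ∧
      (∀ (γ : Γ) (n : ℕ), 0 ≤ γ → γ ≤ n • γ₁ → ∃ m : ℤ, γ = m • γ₁) ∧
      (∀ g h₁ h₂ : Γ, h₁ ∈ AddSubgroup.zmultiples γ₁ → h₂ ∈ AddSubgroup.zmultiples γ₁ →
        h₁ ≤ g → g ≤ h₂ → g ∈ AddSubgroup.zmultiples γ₁) ∧
      Nonempty (AddSubgroup.zmultiples γ₁ ≃+ ℤ) ∧
      (∀ H : AddSubgroup Γ,
        (∀ g h₁ h₂ : Γ, h₁ ∈ H → h₂ ∈ H → h₁ ≤ g → g ≤ h₂ → g ∈ H) → H ≠ ⊥ →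
        AddSubgroup.zmultiples γ₁ ≤ H) := by
  set S := {γ : Γ | 0 ≤ γ ∧ ∀ δ ∈ Δ, 0 < δ → γ < δ} with hSdef
  -- there exists a strictly positive element of S
  obtain ⟨a, b, ha, hb, hab⟩ := (Set.one_lt_ncard_iff hfin).mp hone
  have hpos : ∃ γ, γ ∈ S ∧ 0 < γ := by
    rcases eq_or_ne a 0 with h0 | h0
    · exact ⟨b, hb, lt_of_le_of_ne hb.1 (by rintro rfl; exact hab h0)⟩
    · exact ⟨a, ha, lt_of_le_of_ne ha.1 (Ne.symm h0)⟩
  obtain ⟨c, hcS, hcpos⟩ := hpos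
  -- the set of positive elements ≤ c is finite and nonempty
  have hTS : {x : Γ | 0 < x ∧ x ≤ c} ⊆ S := by
    rintro x ⟨hx0, hxc⟩
    exact ⟨hx0.le, fun δ hδ hδpos => lt_of_le_of_lt hxc (hcS.2 δ hδ hδpos)⟩
  obtain ⟨γ₁, hγ₁T, hγ₁min⟩ := Set.exists_min_image _ id (hfin.subset hTS)
    ⟨c, hcpos, le_refl c⟩
  have hγ₁pos : 0 < γ₁ := hγ₁T.1
  have hleast : IsLeast {γ : Γ | 0 < γ} γ₁ := by
    constructor
    · exact hγ₁pos
    · intro x hx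
      rcases le_or_gt x c with h | h
      · exact hγ₁min x ⟨hx, h⟩
      · exact le_trans hγ₁T.2 h.le
  -- key multiple property
  have hkey : ∀ (γ : Γ) (n : ℕ), 0 ≤ γ → γ ≤ n • γ₁ → ∃ m : ℤ, γ = m • γ₁ := by
    intro γ n
    induction n generalizing γ with
    | zero =>
      intro h0 hn
      simp only [zero_smul] at hn
      exact ⟨0, by simpa using le_antisymm hn h0⟩
    | succ n ih =>
      intro h0 hn
      rcases le_or_gt γ (n • γ₁) with h | h
      · exact ih γ h0 h
      · have h1 : 0 < γ - n • γ₁ := sub_pos.mpr h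
        have h2 : γ₁ ≤ γ - n • γ₁ := hleast.2 h1
        rw [succ_nsmul] at hn
        have h3 : γ - n • γ₁ ≤ γ₁ := sub_le_iff_le_add'.mpr hn
        have h4 : γ - n • γ₁ = γ₁ := le_antisymm h3 h2
        refine ⟨n + 1, ?_⟩
        rw [add_zsmul, one_zsmul, natCast_zsmul, add_comm]
        exact sub_eq_iff_eq_add.mp h4
  -- convexity of zmultiples γ₁
  have hconv : ∀ g h₁ h₂ : Γ, h₁ ∈ AddSubgroup.zmultiples γ₁ →
      h₂ ∈ AddSubgroup.zmultiples γ₁ → h₁ ≤ g → g ≤ h₂ →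
      g ∈ AddSubgroup.zmultiples γ₁ := by
    intro g h₁ h₂ hm1 hm2 hle1 hle2
    rw [AddSubgroup.mem_zmultiples_iff] at hm1 hm2 ⊢
    obtain ⟨i, rfl⟩ := hm1
    obtain ⟨j, rfl⟩ := hm2
    have hij : i ≤ j := by
      rw [← zsmul_le_zsmul_iff_left hγ₁pos]
      exact le_trans hle1 hle2
    have h0 : 0 ≤ g - i • γ₁ := sub_nonneg.mpr hle1
    have hub : g - i • γ₁ ≤ (j - i).toNat • γ₁ := by
      have hcast : ((j - i).toNat : ℤ) • γ₁ = (j - i) • γ₁ := by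
        rw [Int.toNat_of_nonneg (sub_nonneg.mpr hij)]
      rw [← natCast_zsmul, hcast, sub_zsmul]
      simpa [sub_eq_add_neg] using sub_le_sub_right hle2 (i • γ₁)
    obtain ⟨m, hm⟩ := hkey _ _ h0 hub
    exact ⟨m + i, by rw [add_zsmul]; exact (sub_eq_iff_eq_add.mp hm).symm⟩
  refine ⟨γ₁, hleast, hkey, hconv, ?_, ?_⟩
  · -- isomorphism with ℤ
    refine ⟨AddEquiv.symm (AddEquiv.ofBijective
      ({ toFun := fun m : ℤ => ⟨m • γ₁,
          (AddSubgroup.mem_zmultiples_iff).mpr ⟨m, rfl⟩⟩,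
         map_zero' := by ext; simp,
         map_add' := by intro x y; ext; simp [add_zsmul] } :
         ℤ →+ AddSubgroup.zmultiples γ₁) ?_)⟩
    constructor
    · intro i j hij
      have heq : i • γ₁ = j • γ₁ := congrArg Subtype.val hij
      by_contra hne
      rcases lt_or_gt_of_ne hne with h | h
      · exact absurd heq (ne_of_lt (zsmul_lt_zsmul_left hγ₁pos h))
      · exact absurd heq.symm (ne_of_lt (zsmul_lt_zsmul_left hγ₁pos h))
    · rintro ⟨x, hx⟩
      rw [AddSubgroup.mem_zmultiples_iff] at hx
      obtain ⟨k, hk⟩ := hx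
      exact ⟨k, by ext; simpa using hk⟩
  · -- smallest nonzero convex subgroup
    intro H hHconv hHne
    have hex : ∃ x ∈ H, x ≠ 0 := by
      by_contra h
      push_neg at h
      exact hHne (by
        ext y
        simp only [AddSubgroup.mem_bot]
        exact ⟨fun hy => h y hy, fun hy => hy ▸ H.zero_mem⟩)
    obtain ⟨x, hxH, hx0⟩ := hex
    have hγ₁H : γ₁ ∈ H := by
      rcases lt_or_gt_of_ne hx0 with h | h
      · exact hHconv γ₁ 0 (-x) H.zero_mem (H.neg_mem hxH) hγ₁pos.le
          (hleast.2 (neg_pos.mpr h))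
      · exact hHconv γ₁ 0 x H.zero_mem hxH hγ₁pos.le (hleast.2 h)
    intro y hy
    rw [AddSubgroup.mem_zmultiples_iff] at hy
    obtain ⟨k, rfl⟩ := hy
    exact AddSubgroup.zsmul_mem H hγ₁H k
end

section
/- Let Γ be a linearly ordered abelian group and Δ a subgroup of Γ. Assume ε := ε(Γ|Δ) is finite and ε > 1, and let 0 = γ₀ < γ₁ < ⋯ < γ_{ε-1} be the complete list of elements γ of Γ with γ ≥ 0 and γ < δ for every positive δ ∈ Δ. Then γ_k = k·γ₁ for every k with 1 ≤ k ≤ ε−1, and ε·γ₁ ∈ Δ. -/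
/-- Let `Δ ≤ Γ` with initial index `ε` finite and `ε > 1`, and let
`0 = γ₀ < γ₁ < ⋯ < γ_{ε-1}` enumerate the elements `γ ∈ Γ` with `γ ≥ 0` and `γ < δ`
for every positive `δ ∈ Δ`.  Then `γ_k = k • γ₁` for all `k` and `ε • γ₁ ∈ Δ`. -/
theorem stmt1 (Γ : Type*) [AddCommGroup Γ] [LinearOrder Γ] [IsOrderedAddMonoid Γ] (Δ : AddSubgroup Γ)
    (e : ℕ) (he : 1 < e) (γ : Fin e → Γ) (hmono : StrictMono γ)
    (hzero : γ ⟨0, Nat.lt_of_lt_of_le Nat.zero_lt_one he.le⟩ = 0)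
    (hrange : Set.range γ = {g : Γ | 0 ≤ g ∧ ∀ δ ∈ Δ, 0 < δ → g < δ}) :
    (∀ k : Fin e, γ k = (k : ℕ) • γ ⟨1, he⟩) ∧ e • γ ⟨1, he⟩ ∈ Δ := by
  set μ := γ ⟨1, he⟩ with hμ
  have h0e : (0:ℕ) < e := Nat.lt_of_lt_of_le Nat.zero_lt_one he.le
  have hmemS : ∀ k : Fin e, 0 ≤ γ k ∧ ∀ δ ∈ Δ, 0 < δ → γ k < δ := by
    intro k
    have hk : γ k ∈ Set.range γ := ⟨k, rfl⟩
    rw [hrange] at hk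
    exact hk
  -- S is closed under differences
  have hdiff : ∀ a b : Fin e, γ a ≤ γ b → ∃ j : Fin e, γ j = γ b - γ a := by
    intro a b hab
    have : γ b - γ a ∈ Set.range γ := by
      rw [hrange]
      refine ⟨sub_nonneg.2 hab, fun δ hδ hδpos => ?_⟩
      exact lt_of_le_of_lt (sub_le_self _ (hmemS a).1) ((hmemS b).2 δ hδ hδpos)
    exact this
  have hμpos : 0 < μ := by
    rw [← hzero]
    exact hmono (show (⟨0, _⟩ : Fin e) < ⟨1, he⟩ from Nat.zero_lt_one)
  -- μ is the least positive element of S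
  have hmin : ∀ k : Fin e, 0 < γ k → μ ≤ γ k := by
    intro k hk
    rcases Nat.eq_zero_or_pos k.val with h | h
    · have : k = ⟨0, h0e⟩ := Fin.ext h
      rw [this, hzero] at hk
      exact absurd hk (lt_irrefl 0)
    · exact hmono.monotone (show (⟨1, he⟩ : Fin e) ≤ k from h)
  -- main induction
  have key : ∀ n (h : n < e), γ ⟨n, h⟩ = n • μ := by
    intro n
    induction n with
    | zero => intro h; simpa using hzero
    | succ n ih =>
      intro h'
      have h : n < e := Nat.lt_of_succ_lt h'
      have hab : γ ⟨n, h⟩ < γ ⟨n+1, h'⟩ := hmono (Nat.lt_succ_self n)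
      -- γ_{n+1} - γ_n ≥ μ
      obtain ⟨j, hj⟩ := hdiff ⟨n, h⟩ ⟨n+1, h'⟩ hab.le
      have hjpos : 0 < γ j := by rw [hj]; exact sub_pos.2 hab
      have h1 : μ ≤ γ ⟨n+1, h'⟩ - γ ⟨n, h⟩ := hj ▸ hmin j hjpos
      -- γ_{n+1} - μ ≤ γ_n
      have hμle : μ ≤ γ ⟨n+1, h'⟩ :=
        hmono.monotone (show (⟨1, he⟩ : Fin e) ≤ ⟨n+1, h'⟩ from Nat.succ_le_succ (Nat.zero_le n))
      obtain ⟨i, hi⟩ := hdiff ⟨1, he⟩ ⟨n+1, h'⟩ hμle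
      have hilt : γ i < γ ⟨n+1, h'⟩ := by rw [hi]; exact sub_lt_self _ hμpos
      have hival : i < (⟨n+1, h'⟩ : Fin e) := hmono.lt_iff_lt.mp hilt
      have hile : i ≤ (⟨n, h⟩ : Fin e) := Nat.lt_succ_iff.mp hival
      have h2 : γ ⟨n+1, h'⟩ - μ ≤ γ ⟨n, h⟩ := hi ▸ hmono.monotone hile
      have heq : γ ⟨n+1, h'⟩ = γ ⟨n, h⟩ + μ := by
        refine le_antisymm (sub_le_iff_le_add.mp h2) ?_
        rw [add_comm]
        exact le_sub_iff_add_le.mp h1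
      rw [heq, ih h, succ_nsmul]
  refine ⟨fun k => by simpa using key k.val k.isLt, ?_⟩
  -- second part
  have hM : γ ⟨e-1, Nat.sub_lt h0e Nat.zero_lt_one⟩ = (e-1) • μ :=
    key (e-1) (Nat.sub_lt h0e Nat.zero_lt_one)
  set M := γ ⟨e-1, Nat.sub_lt h0e Nat.zero_lt_one⟩ with hMdef
  have hmax : ∀ k : Fin e, γ k ≤ M :=
    fun k => hmono.monotone (show k ≤ ⟨e-1, _⟩ from Nat.le_sub_one_of_lt k.isLt)
  have heμ : e • μ = M + μ := by
    rw [hM, ← succ_nsmul, Nat.sub_add_cancel h0e]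
  have hMnonneg : (0:Γ) ≤ M := (hmemS _).1
  have h0le : (0:Γ) ≤ e • μ := by rw [heμ]; exact add_nonneg hMnonneg hμpos.le
  have hnotS : e • μ ∉ Set.range γ := by
    intro hcon
    obtain ⟨j, hj⟩ := hcon
    have h1 := hmax j
    rw [hj, heμ] at h1
    exact absurd h1 (not_le.2 (lt_add_of_pos_right M hμpos))
  rw [hrange] at hnotS
  have hex : ∃ δ ∈ Δ, 0 < δ ∧ δ ≤ e • μ := by
    by_contra hc
    push_neg at hc
    exact hnotS ⟨h0le, fun δ hδ hp => hc δ hδ hp⟩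
  obtain ⟨δ, hδΔ, hδpos, hδle⟩ := hex
  have hMδ : M < δ := (hmemS _).2 δ hδΔ hδpos
  have hlt : e • μ - δ < μ := by
    rw [heμ]
    refine sub_lt_iff_lt_add.mpr ?_
    calc M + μ = μ + M := add_comm _ _
    _ < μ + δ := add_lt_add_right hMδ μ
  -- e•μ - δ ∈ S and < μ, hence = 0
  have hsub : e • μ - δ ∈ Set.range γ := by
    rw [hrange]
    refine ⟨sub_nonneg.2 hδle, fun δ' hδ' hδ'pos => ?_⟩
    exact hlt.trans ((hmemS ⟨1, he⟩).2 δ' hδ' hδ'pos)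
  obtain ⟨j, hj⟩ := hsub
  have hj0 : γ j = 0 := by
    rcases lt_or_eq_of_le (hmemS j).1 with hpos | h0
    · exact absurd (hj ▸ hlt : γ j < μ) (not_lt.2 (hmin j hpos))
    · exact h0.symm
  have : e • μ = δ := sub_eq_zero.mp (hj ▸ hj0)
  rw [this]
  exact hδΔ
end

section
/- Let Γ be a linearly ordered abelian group and Δ a subgroup of Γ of finite index. Then ε(Γ|Δ) ≤ (Γ : Δ), where (Γ : Δ) denotes the index of Δ in Γ. -/
/-- If `Δ` is a subgroup of finite index of a linearly ordered abelian
group `Γ`, then the initial index `ε(Γ|Δ)` is finite and `ε(Γ|Δ) ≤ (Γ : Δ)`. -/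
theorem stmt2 (Γ : Type*) [AddCommGroup Γ] [LinearOrder Γ] [IsOrderedAddMonoid Γ] (Δ : AddSubgroup Γ)
    (hΔ : Δ.index ≠ 0) :
    ({γ : Γ | 0 ≤ γ ∧ ∀ δ ∈ Δ, 0 < δ → γ < δ}).Finite ∧
      ({γ : Γ | 0 ≤ γ ∧ ∀ δ ∈ Δ, 0 < δ → γ < δ}).ncard ≤ Δ.index := by
  set S := {γ : Γ | 0 ≤ γ ∧ ∀ δ ∈ Δ, 0 < δ → γ < δ} with hS
  have hfin : Finite (Γ ⧸ Δ) := Nat.finite_of_card_ne_zero hΔ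
  have hinj : Set.InjOn (QuotientAddGroup.mk (s := Δ)) S := by
    intro a ha b hb hab
    rw [QuotientAddGroup.eq] at hab
    by_contra hne
    rcases lt_or_gt_of_ne hne with h | h
    · have hpos : 0 < -a + b := by rw [neg_add_eq_sub]; exact sub_pos.mpr h
      have hlt := hb.2 _ hab hpos
      rw [neg_add_eq_sub] at hlt
      exact absurd hlt (not_lt.mpr (sub_le_self b ha.1))
    · have hmem : -b + a ∈ Δ := by simpa [neg_add_rev] using Δ.neg_mem hab
      have hpos : 0 < -b + a := by rw [neg_add_eq_sub]; exact sub_pos.mpr h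
      have hlt := ha.2 _ hmem hpos
      rw [neg_add_eq_sub] at hlt
      exact absurd hlt (not_lt.mpr (sub_le_self a hb.1))
  have himg : (QuotientAddGroup.mk (s := Δ) '' S).Finite := Set.toFinite _
  have hSfin : S.Finite := Set.Finite.of_finite_image himg hinj
  refine ⟨hSfin, ?_⟩
  have h1 : S.ncard = (QuotientAddGroup.mk (s := Δ) '' S).ncard :=
    (Set.ncard_image_of_injOn hinj).symm
  have h2 : (QuotientAddGroup.mk (s := Δ) '' S).ncard ≤ Nat.card (Γ ⧸ Δ) := by
    rw [← Set.ncard_univ]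
    exact Set.ncard_le_ncard (Set.subset_univ _) Set.finite_univ
  rw [AddSubgroup.index]
  omega
end

section
/- Let Γ be a linearly ordered abelian group and Δ a subgroup of Γ of finite index. Then ε(Γ|Δ) = (Γ : Δ) if and only if the monoid Δ_{≥0} of nonnegative elements of Δ has finite index in the monoid Γ_{≥0} of nonnegative elements of Γ, i.e. if and only if there exist finitely many elements γ₀, …, γ_{n-1} ∈ Γ_{≥0} (with γ₀ = 0) such that Γ_{≥0} = ⋃_{i=0}^{n-1} (γ_i + Δ_{≥0}). -/
section aux

variable {Γ : Type*} [AddCommGroup Γ] [LinearOrder Γ] [IsOrderedAddMonoid Γ] (Δ : AddSubgroup Γ)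

/-- Elements of the "epsilon set" lie in distinct cosets. -/
lemma stmt3_aux_inj {a b : Γ}
    (ha : 0 ≤ a ∧ ∀ δ ∈ Δ, 0 < δ → a < δ) (hb : 0 ≤ b ∧ ∀ δ ∈ Δ, 0 < δ → b < δ)
    (hm : a - b ∈ Δ) : a = b := by
  have key : ∀ x y : Γ, (0 ≤ x ∧ ∀ δ ∈ Δ, 0 < δ → x < δ) →
      (0 ≤ y ∧ ∀ δ ∈ Δ, 0 < δ → y < δ) → x ≤ y → y - x ∈ Δ → x = y := by
    intro x y hx hy hxy hmem
    by_contra hne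
    have hlt : x < y := lt_of_le_of_ne hxy hne
    have hpos : 0 < y - x := sub_pos.mpr hlt
    have h1 : y < y - x := hy.2 _ hmem hpos
    have h2 : y + x < y := lt_sub_iff_add_lt.mp h1
    have h3 : x < 0 := add_lt_iff_neg_left.mp h2
    exact absurd hx.1 (not_le.mpr h3)
  rcases le_total a b with h | h
  · exact key a b ha hb h (by simpa using Δ.neg_mem hm)
  · exact (key b a hb ha h hm).symm

/-- Every coset of a finite-index subgroup contains a nonnegative element. -/
lemma stmt3_aux_coset (hΔ : Δ.index ≠ 0) (c : Γ) : ∃ c', 0 ≤ c' ∧ c' - c ∈ Δ := by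
  rcases le_total 0 c with h | h
  · exact ⟨c, h, by simpa using Δ.zero_mem⟩
  · refine ⟨(Δ.index - 1) • (-c), nsmul_nonneg (neg_nonneg.mpr h) _, ?_⟩
    have hmem : Δ.index • c ∈ Δ := AddSubgroup.nsmul_index_mem Δ c
    have h1 : 1 ≤ Δ.index := Nat.one_le_iff_ne_zero.mpr hΔ
    have hsucc : Δ.index - 1 + 1 = Δ.index := Nat.succ_pred_eq_of_pos h1
    have heq : (Δ.index - 1) • (-c) - c = -(Δ.index • c) := by
      rw [← hsucc, succ_nsmul, smul_neg]
      rw [neg_add, sub_eq_add_neg, Nat.add_sub_cancel]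
    rw [heq]
    exact Δ.neg_mem hmem

end aux

/-- Let `Δ` be a subgroup of finite index of a linearly ordered abelian
group `Γ`.  Then `ε(Γ|Δ) = (Γ : Δ)` if and only if the monoid `Δ_{≥0}` has finite index
in the monoid `Γ_{≥0}`, i.e. iff there are `γ₀ = 0, γ₁, …, γ_n ∈ Γ_{≥0}` with
`Γ_{≥0} = ⋃ᵢ (γᵢ + Δ_{≥0})`. -/
theorem stmt3 (Γ : Type*) [AddCommGroup Γ] [LinearOrder Γ] [IsOrderedAddMonoid Γ] (Δ : AddSubgroup Γ)
    (hΔ : Δ.index ≠ 0) :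
    ({γ : Γ | 0 ≤ γ ∧ ∀ δ ∈ Δ, 0 < δ → γ < δ}).ncard = Δ.index ↔
      ∃ (n : ℕ) (γ : Fin (n + 1) → Γ), γ 0 = 0 ∧ (∀ i, 0 ≤ γ i) ∧
        ∀ g : Γ, 0 ≤ g → ∃ i, ∃ δ ∈ Δ, 0 ≤ δ ∧ g = γ i + δ := by
  classical
  set E : Set Γ := {γ : Γ | 0 ≤ γ ∧ ∀ δ ∈ Δ, 0 < δ → γ < δ} with hEdef
  have hQcard : Nat.card (Γ ⧸ Δ) = Δ.index := (AddSubgroup.index_eq_card Δ).symm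
  have hQfin : Finite (Γ ⧸ Δ) := Nat.finite_of_card_ne_zero (by rw [hQcard]; exact hΔ)
  set f : E → Γ ⧸ Δ := fun e => QuotientAddGroup.mk (e : Γ) with hfdef
  have hfinj : Function.Injective f := by
    intro a b hab
    have hm : (a : Γ) - b ∈ Δ := QuotientAddGroup.eq_iff_sub_mem.mp hab
    exact Subtype.ext (stmt3_aux_inj Δ a.2 b.2 hm)
  constructor
  · -- forward: ncard E = index → finite monoid index
    intro h
    have hcardE : Nat.card E = Δ.index := by rw [Nat.card_coe_set_eq, h]
    have hEfin' : Finite E := Nat.finite_of_card_ne_zero (by rw [hcardE]; exact hΔ)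
    have hEfin : E.Finite := Set.finite_coe_iff.mp hEfin'
    have hbij : Function.Bijective f :=
      (Nat.bijective_iff_injective_and_card f).mpr ⟨hfinj, by rw [hcardE, hQcard]⟩
    set l : List Γ := hEfin.toFinset.toList with hldef
    have hlmem : ∀ x ∈ l, x ∈ E := by
      intro x hx
      exact hEfin.mem_toFinset.mp (Finset.mem_toList.mp hx)
    refine ⟨l.length, fun i => if (i : ℕ) = 0 then 0 else l.getD ((i : ℕ) - 1) 0, by simp, ?_, ?_⟩
    · intro i
      by_cases h0 : (i : ℕ) = 0
      · simp [h0]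
      · simp only [h0, if_false]
        by_cases hlt : (i : ℕ) - 1 < l.length
        · rw [List.getD_eq_getElem _ _ hlt]
          exact (hlmem _ (List.getElem_mem hlt)).1
        · rw [List.getD_eq_default _ _ (not_lt.mp hlt)]
    · intro g hg
      obtain ⟨e, he⟩ := hbij.2 (QuotientAddGroup.mk g)
      have hm : (e : Γ) - g ∈ Δ := QuotientAddGroup.eq_iff_sub_mem.mp he
      set δ : Γ := g - (e : Γ) with hδdef
      have hδmem : δ ∈ Δ := by simpa [hδdef] using Δ.neg_mem hm
      have hδnn : 0 ≤ δ := by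
        by_contra hneg
        have hpos : 0 < -δ := neg_pos.mpr (not_le.mp hneg)
        have hlt : (e : Γ) < -δ := e.2.2 _ (Δ.neg_mem hδmem) hpos
        have heq : -δ = (e : Γ) - g := by rw [hδdef]; abel
        rw [heq] at hlt
        have h2 : (e : Γ) + g < (e : Γ) := lt_sub_iff_add_lt.mp hlt
        exact absurd hg (not_le.mpr (add_lt_iff_neg_left.mp h2))
      -- find the index of e in l
      have hel : (e : Γ) ∈ l := Finset.mem_toList.mpr (hEfin.mem_toFinset.mpr e.2)
      obtain ⟨k, hk, hke⟩ := List.getElem_of_mem hel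
      refine ⟨⟨k + 1, by omega⟩, δ, hδmem, hδnn, ?_⟩
      have : ¬ ((⟨k + 1, by omega⟩ : Fin (l.length + 1)) : ℕ) = 0 := by simp
      simp only [this, if_false]
      have hidx : ((⟨k + 1, by omega⟩ : Fin (l.length + 1)) : ℕ) - 1 = k := by simp
      rw [hidx, List.getD_eq_getElem _ _ hk, hke, hδdef]
      abel
  · -- backward: finite monoid index → ncard E = index
    rintro ⟨n, γ, h0, hnn, hcov⟩
    -- every coset contains an element of E
    have hsurj : Function.Surjective f := by
      intro q
      obtain ⟨c, rfl⟩ := QuotientAddGroup.mk_surjective q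
      obtain ⟨c', hc'0, hc'c⟩ := stmt3_aux_coset Δ hΔ c
      -- the set of indices whose γ lies in the coset of c'
      set F : Finset (Fin (n + 1)) := Finset.univ.filter (fun i => γ i - c' ∈ Δ) with hFdef
      have hFne : F.Nonempty := by
        obtain ⟨i, δ, hδ, hδ0, hgi⟩ := hcov c' hc'0
        refine ⟨i, Finset.mem_filter.mpr ⟨Finset.mem_univ _, ?_⟩⟩
        have : γ i - c' = -δ := by rw [hgi]; abel
        rw [this]; exact Δ.neg_mem hδ
      obtain ⟨i₀, hi₀F, hi₀min⟩ := F.exists_min_image γ hFne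
      have hi₀mem : γ i₀ - c' ∈ Δ := (Finset.mem_filter.mp hi₀F).2
      have hmE : γ i₀ ∈ E := by
        refine ⟨hnn i₀, ?_⟩
        intro δ hδ hδpos
        by_contra hle
        have hle' : δ ≤ γ i₀ := not_lt.mp hle
        have hnn' : 0 ≤ γ i₀ - δ := sub_nonneg.mpr hle'
        obtain ⟨j, δ', hδ', hδ'0, hj⟩ := hcov _ hnn'
        have hjeq : γ j = γ i₀ - δ - δ' := eq_sub_iff_add_eq.mpr hj.symm
        have hjF : j ∈ F := by
          refine Finset.mem_filter.mpr ⟨Finset.mem_univ _, ?_⟩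
          have heq2 : γ j - c' = (γ i₀ - c') - δ - δ' := by rw [hjeq]; abel
          rw [heq2]
          exact Δ.sub_mem (Δ.sub_mem hi₀mem hδ) hδ'
        have h1 : γ i₀ ≤ γ j := hi₀min j hjF
        have h3 : γ i₀ ≤ γ i₀ - (δ + δ') := by
          rw [← sub_sub]; exact hjeq ▸ h1
        have h4 : γ i₀ + (δ + δ') ≤ γ i₀ := le_sub_iff_add_le.mp h3
        have h5 : δ + δ' ≤ 0 := (add_le_iff_nonpos_right _).mp h4
        exact absurd (add_pos_of_pos_of_nonneg hδpos hδ'0) (not_lt.mpr h5)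
      refine ⟨⟨γ i₀, hmE⟩, ?_⟩
      show QuotientAddGroup.mk (γ i₀) = QuotientAddGroup.mk c
      rw [QuotientAddGroup.eq_iff_sub_mem]
      have : γ i₀ - c = (γ i₀ - c') + (c' - c) := by abel
      rw [this]
      exact Δ.add_mem hi₀mem hc'c
    have hbij : Function.Bijective f := ⟨hfinj, hsurj⟩
    have := Nat.card_eq_of_bijective f hbij
    rw [← Nat.card_coe_set_eq, this, hQcard]
end

section
/- Let Γ be a linearly ordered abelian group and Δ a subgroup of Γ of finite index, and suppose ε := ε(Γ|Δ) = (Γ : Δ). Let 0 = γ₀ < γ₁ < ⋯ < γ_{ε-1} be all the elements of Γ_{≥0} that are smaller than every positive element of Δ. Then Γ = ⋃_{i=0}^{ε-1} (γ_i + Δ) and Γ_{≥0} = ⋃_{i=0}^{ε-1} (γ_i + Δ_{≥0}), these unions being disjoint, and the quotient group Γ/Δ is cyclic of order ε, i.e. Γ/Δ ≅ ℤ/εℤ. -/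
/-- Let `Δ ≤ Γ` be of finite index with `ε(Γ|Δ) = (Γ : Δ) = e`, and let
`0 = γ₀ < γ₁ < ⋯ < γ_{e-1}` enumerate the elements of `Γ_{≥0}` smaller than every
positive element of `Δ`.  Then `Γ = ⋃ᵢ (γᵢ + Δ)` and `Γ_{≥0} = ⋃ᵢ (γᵢ + Δ_{≥0})`,
the cosets `γᵢ + Δ` being pairwise disjoint, and `Γ/Δ ≅ ℤ/eℤ`. -/
theorem stmt4 (Γ : Type*) [AddCommGroup Γ] [LinearOrder Γ] [IsOrderedAddMonoid Γ] (Δ : AddSubgroup Γ)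
    (e : ℕ) (he : e = Δ.index) (hΔ : Δ.index ≠ 0)
    (γ : Fin e → Γ) (hmono : StrictMono γ)
    (hrange : Set.range γ = {g : Γ | 0 ≤ g ∧ ∀ δ ∈ Δ, 0 < δ → g < δ}) :
    (∀ g : Γ, ∃ i, ∃ δ ∈ Δ, g = γ i + δ) ∧
    (∀ g : Γ, 0 ≤ g → ∃ i, ∃ δ ∈ Δ, 0 ≤ δ ∧ g = γ i + δ) ∧
    (∀ i j : Fin e, i ≠ j → ∀ δ₁ ∈ Δ, ∀ δ₂ ∈ Δ, γ i + δ₁ ≠ γ j + δ₂) ∧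
    Nonempty ((Γ ⧸ Δ) ≃+ ZMod e) := by
  have he0 : e ≠ 0 := he ▸ hΔ
  have hpos : 0 < e := Nat.pos_of_ne_zero he0
  have hS : ∀ i, 0 ≤ γ i ∧ ∀ δ ∈ Δ, 0 < δ → γ i < δ := by
    intro i
    have h : γ i ∈ Set.range γ := Set.mem_range_self i
    rw [hrange] at h; exact h
  have hne : ∀ i j : Fin e, i < j → γ j - γ i ∉ Δ := by
    intro i j hij hmem
    have h1 : 0 < γ j - γ i := sub_pos.mpr (hmono hij)
    have h2 := (hS j).2 _ hmem h1
    have h3 := (hS i).1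
    exact absurd h2 (not_lt.mpr (sub_le_self _ h3))
  have key3 : ∀ i j : Fin e, i ≠ j → ∀ δ₁ ∈ Δ, ∀ δ₂ ∈ Δ, γ i + δ₁ ≠ γ j + δ₂ := by
    intro i j hij δ₁ h1 δ₂ h2 heq
    rcases hij.lt_or_gt with h | h
    · refine hne i j h ?_
      have hd : γ j - γ i = δ₁ - δ₂ :=
        sub_eq_sub_iff_add_eq_add.mpr (by rw [add_comm δ₁, ← heq])
      rw [hd]; exact sub_mem h1 h2
    · refine hne j i h ?_
      have hd : γ i - γ j = δ₂ - δ₁ :=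
        sub_eq_sub_iff_add_eq_add.mpr (by rw [add_comm δ₂, heq])
      rw [hd]; exact sub_mem h2 h1
  have hcard : Nat.card (Γ ⧸ Δ) = e := by rw [he]; rfl
  have hfin : Finite (Γ ⧸ Δ) := Nat.finite_of_card_ne_zero (by rw [hcard]; exact he0)
  have hfinj : Function.Injective (fun i : Fin e => (QuotientAddGroup.mk (γ i) : Γ ⧸ Δ)) := by
    intro i j hEq
    by_contra hij
    have h' : γ j - γ i ∈ Δ ∨ γ i - γ j ∈ Δ := by
      left
      have := (QuotientAddGroup.eq (s := Δ)).mp hEq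
      simpa [neg_add_eq_sub] using this
    rcases Ne.lt_or_gt hij with h | h
    · rcases h' with h'' | h''
      · exact hne i j h h''
      · exact hne i j h (by simpa using neg_mem h'')
    · rcases h' with h'' | h''
      · exact hne j i h (by simpa using neg_mem h'')
      · exact hne j i h h''
  have hfbij : Function.Bijective (fun i : Fin e => (QuotientAddGroup.mk (γ i) : Γ ⧸ Δ)) := by
    refine (Nat.bijective_iff_injective_and_card _).mpr ⟨hfinj, ?_⟩
    simp [hcard]
  have key1 : ∀ g : Γ, ∃ i, ∃ δ ∈ Δ, g = γ i + δ := by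
    intro g
    obtain ⟨i, hi⟩ := hfbij.2 (QuotientAddGroup.mk g)
    refine ⟨i, g - γ i, ?_, by abel⟩
    have := (QuotientAddGroup.eq (s := Δ)).mp hi
    simpa [neg_add_eq_sub] using this
  have key2 : ∀ g : Γ, 0 ≤ g → ∃ i, ∃ δ ∈ Δ, 0 ≤ δ ∧ g = γ i + δ := by
    intro g hg
    obtain ⟨i, δ, hδ, hgi⟩ := key1 g
    refine ⟨i, δ, hδ, ?_, hgi⟩
    by_contra hlt
    push_neg at hlt
    have hneg : 0 < -δ := neg_pos.mpr hlt
    have hlt2 := (hS i).2 _ (neg_mem hδ) hneg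
    have hlt3 : γ i + δ < 0 := by
      have := add_lt_add_left hlt2 δ
      simpa using this
    rw [hgi] at hg
    exact absurd hg (not_le.mpr hlt3)
  refine ⟨key1, key2, key3, ?_⟩
  -- `γ 0 = 0`
  have hz : (0 : Γ) ∈ Set.range γ := by
    rw [hrange]; exact ⟨le_refl 0, fun δ _ hδ => hδ⟩
  obtain ⟨k0, hk0⟩ := hz
  have hγ0 : γ ⟨0, hpos⟩ = 0 := by
    refine le_antisymm ?_ (hS _).1
    calc γ ⟨0, hpos⟩ ≤ γ k0 := hmono.monotone (by simp [Fin.le_def])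
      _ = 0 := hk0
  rcases eq_or_lt_of_le (Nat.one_le_iff_ne_zero.mpr he0) with he1 | h1e
  · -- trivial case `e = 1`
    have hone : Nat.card (Γ ⧸ Δ) = 1 := by rw [hcard, ← he1]
    have hsub : Subsingleton (Γ ⧸ Δ) :=
      (Nat.card_eq_one_iff_unique.mp hone).1
    subst he1
    exact ⟨AddEquiv.ofBijective (0 : (Γ ⧸ Δ) →+ ZMod 1)
      ⟨fun a b _ => Subsingleton.elim a b, fun y => ⟨0, Subsingleton.elim _ _⟩⟩⟩
  · -- main case `e ≥ 2`
    set a : Γ := γ ⟨1, h1e⟩ with ha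
    have ha0 : 0 < a := by
      rw [← hγ0]; exact hmono (by simp [Fin.lt_def])
    have haS := hS ⟨1, h1e⟩
    -- no element of `S` lies strictly between `0` and `a`
    have hC : ∀ s : Γ, 0 ≤ s → (∀ δ ∈ Δ, 0 < δ → s < δ) → s < a → s = 0 := by
      intro s h0 hb hlt
      have hs : s ∈ Set.range γ := by rw [hrange]; exact ⟨h0, hb⟩
      obtain ⟨k, hk⟩ := hs
      rcases Nat.eq_zero_or_pos k.val with hk0' | hk1
      · rw [← hk, ← hγ0]
        congr 1
        exact Fin.ext hk0'
      · exfalso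
        have hle : a ≤ γ k := hmono.monotone (by simp [Fin.le_def]; omega)
        rw [hk] at hle
        exact absurd hlt (not_lt.mpr hle)
    -- successor step: `γ (i+1) = γ i + a`
    have hD : ∀ i : ℕ, ∀ h : i + 1 < e,
        γ ⟨i + 1, h⟩ = γ ⟨i, Nat.lt_of_succ_lt h⟩ + a := by
      intro i h
      have hgi := hS ⟨i, Nat.lt_of_succ_lt h⟩
      have hgi1 := hS ⟨i + 1, h⟩
      have hmlt : γ ⟨i, Nat.lt_of_succ_lt h⟩ < γ ⟨i + 1, h⟩ :=
        hmono (by simp [Fin.lt_def])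
      have hstep : ¬ (γ ⟨i + 1, h⟩ < γ ⟨i, Nat.lt_of_succ_lt h⟩ + a) := by
        intro hlt
        have hs0 : (0 : Γ) ≤ γ ⟨i + 1, h⟩ - γ ⟨i, Nat.lt_of_succ_lt h⟩ :=
          le_of_lt (sub_pos.mpr hmlt)
        have hsa : γ ⟨i + 1, h⟩ - γ ⟨i, Nat.lt_of_succ_lt h⟩ < a :=
          sub_lt_iff_lt_add'.mpr hlt
        have hsb : ∀ δ ∈ Δ, 0 < δ → γ ⟨i + 1, h⟩ - γ ⟨i, Nat.lt_of_succ_lt h⟩ < δ :=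
          fun δ hδ hpδ => lt_trans hsa (haS.2 δ hδ hpδ)
        have hzero := hC _ hs0 hsb hsa
        have := sub_pos.mpr hmlt
        rw [hzero] at this
        exact lt_irrefl 0 this
      have htS : γ ⟨i, Nat.lt_of_succ_lt h⟩ + a ∈ Set.range γ := by
        rw [hrange]
        refine ⟨add_nonneg hgi.1 (le_of_lt ha0), ?_⟩
        intro δ hδ hpδ
        by_contra hge
        push_neg at hge
        exact hstep (lt_of_lt_of_le (hgi1.2 δ hδ hpδ) hge)
      obtain ⟨j, hj⟩ := htS
      have hji : i < j.val := by
        have : (⟨i, Nat.lt_of_succ_lt h⟩ : Fin e) < j := by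
          refine hmono.lt_iff_lt.mp ?_
          rw [hj]
          exact lt_add_of_pos_right _ ha0
        simpa [Fin.lt_def] using this
      have hjle : j.val ≤ i + 1 := by
        by_contra hgt
        push_neg at hgt
        have hlt2 : γ ⟨i + 1, h⟩ < γ j := hmono (by simp [Fin.lt_def]; omega)
        rw [hj] at hlt2
        exact hstep hlt2
      have hjeq : j = ⟨i + 1, h⟩ := Fin.ext (le_antisymm hjle hji)
      rw [← hj, hjeq]
    -- hence `γ i = i • a`
    have hE : ∀ i : ℕ, ∀ hi : i < e, γ ⟨i, hi⟩ = i • a := by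
      intro i
      induction i with
      | zero => intro hi; simpa using hγ0
      | succ n ih =>
        intro hi
        rw [hD n hi, ih (Nat.lt_of_succ_lt hi), succ_nsmul]
    set x : Γ ⧸ Δ := QuotientAddGroup.mk a with hx
    have hxe : (zmultiplesHom (Γ ⧸ Δ) x) (e : ℤ) = 0 := by
      have h0 : (Nat.card (Γ ⧸ Δ)) • x = 0 := card_nsmul_eq_zero'
      rw [hcard] at h0
      simpa [zmultiplesHom_apply, natCast_zsmul] using h0
    set ψ : ZMod e →+ Γ ⧸ Δ := ZMod.lift e ⟨zmultiplesHom (Γ ⧸ Δ) x, hxe⟩ with hψ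
    have hψs : Function.Surjective ψ := by
      intro y
      induction y using QuotientAddGroup.induction_on with
      | H g =>
        obtain ⟨i, δ, hδ, hg⟩ := key1 g
        refine ⟨((i.val : ℤ) : ZMod e), ?_⟩
        rw [hψ, ZMod.lift_coe]
        show (i.val : ℤ) • x = QuotientAddGroup.mk g
        have hmk : (QuotientAddGroup.mk g : Γ ⧸ Δ) = QuotientAddGroup.mk (γ i) := by
          rw [hg]
          refine (QuotientAddGroup.eq (s := Δ)).mpr ?_
          simpa using neg_mem hδ
        have hγi : γ i = i.val • a := by
          have := hE i.val i.isLt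
          simpa using this
        rw [hmk, hγi, natCast_zsmul, hx]
        exact ((QuotientAddGroup.mk' Δ).map_nsmul i.val a).symm
    have : NeZero e := ⟨he0⟩
    have hψb : Function.Bijective ψ :=
      (Nat.bijective_iff_surjective_and_card ψ).mpr ⟨hψs, by rw [Nat.card_zmod, hcard]⟩
    exact ⟨(AddEquiv.ofBijective ψ hψb).symm⟩
end

section
/- Let Γ₁ be a linearly ordered abelian group and let Γ = Γ₁ ⊕_lex ℤ be the direct sum ordered lexicographically (with the Γ₁-coordinate dominant). Let Δ be a subgroup of Γ of finite index with ε(Γ|Δ) = (Γ : Δ) > 1. Then for every γ₁ ∈ Γ₁ with γ₁ > 0 there exists a ∈ ℤ such that (γ₁, a) ∈ Δ. -/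
/-- Let `Γ = Γ₁ ⊕_lex ℤ` (lexicographic order, `Γ₁` dominant) and let
`Δ ≤ Γ` be of finite index with `ε(Γ|Δ) = (Γ : Δ) > 1`.  Then for every `γ₁ ∈ Γ₁` with
`γ₁ > 0` there exists `a ∈ ℤ` with `(γ₁, a) ∈ Δ`. -/
theorem stmt5 (Γ₁ : Type*) [AddCommGroup Γ₁] [LinearOrder Γ₁] [IsOrderedAddMonoid Γ₁]
    (Δ : AddSubgroup (Γ₁ ×ₗ ℤ)) (hΔ : Δ.index ≠ 0)
    (hε : ({g : Γ₁ ×ₗ ℤ | 0 ≤ g ∧ ∀ δ ∈ Δ, 0 < δ → g < δ}).ncard = Δ.index)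
    (hgt : 1 < Δ.index) :
    ∀ g : Γ₁, 0 < g → ∃ a : ℤ, toLex (g, a) ∈ Δ := by
  classical
  intro g hg
  set n := Δ.index with hn
  -- the embedding of ℤ as the second coordinate
  set f : ℤ →+ (Γ₁ ×ₗ ℤ) :=
    { toFun := fun a => toLex (0, a)
      map_zero' := rfl
      map_add' := fun a b => by
        show toLex ((0 : Γ₁), a + b) = toLex ((0 : Γ₁) + 0, a + b); rw [add_zero] } with hfdef
  have hfinj : Function.Injective f := by
    intro a b hab
    have := congrArg (fun x => (ofLex x).2) hab
    exact this
  set K : AddSubgroup ℤ := Δ.comap f with hK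
  -- K = zmultiples a for some a; let m = a.natAbs
  obtain ⟨a, ha⟩ := Int.subgroup_cyclic K
  rw [← AddSubgroup.zmultiples_eq_closure] at ha
  have hmemK : ∀ b : ℤ, toLex ((0 : Γ₁), b) ∈ Δ ↔ a ∣ b := by
    intro b
    have : toLex ((0 : Γ₁), b) ∈ Δ ↔ b ∈ K := Iff.rfl
    rw [this, ha, Int.mem_zmultiples_iff]
  -- (n : ℤ) ∈ K
  have hnK : toLex ((0 : Γ₁), (n : ℤ)) ∈ Δ := by
    have h1 : n • f 1 ∈ Δ := AddSubgroup.nsmul_index_mem Δ (f 1)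
    have h2 : n • f 1 = f (n : ℤ) := by
      rw [← map_nsmul]; norm_num
    rwa [h2] at h1
  have hadvd : a ∣ (n : ℤ) := (hmemK _).mp hnK
  have ha0 : a ≠ 0 := by
    rintro rfl
    rw [zero_dvd_iff] at hadvd
    exact_mod_cast hΔ (by exact_mod_cast hadvd)
  set m : ℕ := a.natAbs with hm
  have hm0 : 0 < m := Int.natAbs_pos.mpr ha0
  have hmmem : toLex ((0 : Γ₁), (m : ℤ)) ∈ Δ := (hmemK _).mpr (Int.dvd_natAbs.mpr dvd_rfl)
  have hdvd_m : ∀ b : ℤ, toLex ((0 : Γ₁), b) ∈ Δ ↔ (m : ℤ) ∣ b := by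
    intro b; rw [hmemK, hm, Int.natAbs_dvd]
  -- identify the set S
  have hmpos : (0 : Γ₁ ×ₗ ℤ) < toLex ((0:Γ₁), (m : ℤ)) :=
    (Prod.Lex.lt_iff (x := toLex ((0:Γ₁),(0:ℤ))) (y := toLex ((0:Γ₁),(m:ℤ)))).mpr (Or.inr ⟨rfl, by show (0:ℤ) < (m:ℤ); exact_mod_cast hm0⟩)
  have hS : {g : Γ₁ ×ₗ ℤ | 0 ≤ g ∧ ∀ δ ∈ Δ, 0 < δ → g < δ}
      = (fun b : ℤ => toLex ((0 : Γ₁), b)) '' (Set.Ico 0 (m : ℤ)) := by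
    ext x
    constructor
    · rintro ⟨hx0, hxlt⟩
      have hxm := hxlt _ hmmem hmpos
      have h0 := (Prod.Lex.le_iff (x := toLex ((0:Γ₁),(0:ℤ))) (y := x)).mp hx0
      have h1 := (Prod.Lex.lt_iff (x := x) (y := toLex ((0:Γ₁),(m:ℤ)))).mp hxm
      simp only [ofLex_toLex] at h0 h1
      rcases h0 with h | ⟨h, h'⟩
      · rcases h1 with h2 | ⟨h2, h3⟩
        · exact absurd (h.trans h2) (lt_irrefl _)
        · rw [h2] at h; exact absurd h (lt_irrefl _)
      · rcases h1 with h2 | ⟨h2, h3⟩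
        · rw [← h] at h2; exact absurd h2 (lt_irrefl _)
        · exact ⟨(ofLex x).2, ⟨h', h3⟩, congrArg toLex (Prod.ext h rfl)⟩
    · rintro ⟨b, ⟨hb0, hbm⟩, rfl⟩
      refine ⟨(Prod.Lex.le_iff (x := toLex ((0:Γ₁),(0:ℤ))) (y := toLex ((0:Γ₁),b))).mpr (Or.inr ⟨rfl, hb0⟩), ?_⟩
      intro δ hδ hδ0
      have h0 := (Prod.Lex.lt_iff (x := toLex ((0:Γ₁),(0:ℤ))) (y := δ)).mp hδ0
      refine (Prod.Lex.lt_iff (x := toLex ((0:Γ₁),b)) (y := δ)).mpr ?_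
      simp only [ofLex_toLex] at h0 ⊢
      rcases h0 with h | ⟨h, h2⟩
      · exact Or.inl h
      · right
        refine ⟨h, ?_⟩
        have hd : toLex ((0 : Γ₁), (ofLex δ).2) ∈ Δ := by
          have : toLex ((0 : Γ₁), (ofLex δ).2) = δ := congrArg toLex (Prod.ext h rfl)
          rwa [this]
        have hdd : (m : ℤ) ∣ (ofLex δ).2 := (hdvd_m _).mp hd
        have hle : (m : ℤ) ≤ (ofLex δ).2 := Int.le_of_dvd h2 hdd
        omega
  -- cardinality of S is m
  have hfinj' : Function.Injective (fun b : ℤ => toLex ((0 : Γ₁), b)) := fun x y h => by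
    have := congrArg (fun z => (ofLex z).2) h; simpa using this
  have hcard : ({g : Γ₁ ×ₗ ℤ | 0 ≤ g ∧ ∀ δ ∈ Δ, 0 < δ → g < δ}).ncard = m := by
    rw [hS, Set.ncard_image_of_injective _ hfinj', ← Finset.coe_Ico, Set.ncard_coe_finset,
      Int.card_Ico]
    simp
  have hmn : m = n := by rw [← hcard, hε]
  -- now use the quotient
  set φ : ℤ →+ (Γ₁ ×ₗ ℤ) ⧸ Δ := (QuotientAddGroup.mk' Δ).comp f with hφ
  have hker : φ.ker = K := by
    ext b
    simp only [hφ, AddMonoidHom.mem_ker, AddMonoidHom.comp_apply, QuotientAddGroup.mk'_apply,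
      QuotientAddGroup.eq_zero_iff]
    rfl
  have hfin : Finite ((Γ₁ ×ₗ ℤ) ⧸ Δ) := by
    have : Nat.card ((Γ₁ ×ₗ ℤ) ⧸ Δ) ≠ 0 := hΔ
    exact (Nat.card_pos_iff.mp (Nat.pos_of_ne_zero this)).2
  have hcardrange : Nat.card φ.range = n := by
    have e := QuotientAddGroup.quotientKerEquivRange φ
    have : Nat.card (ℤ ⧸ φ.ker) = Nat.card φ.range := Nat.card_congr e.toEquiv
    rw [← this]
    have : Nat.card (ℤ ⧸ φ.ker) = φ.ker.index := rfl
    rw [this, hker, ha, Int.index_zmultiples, ← hm, hmn]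
  have hrange : φ.range = ⊤ := by
    haveI : Finite φ.range := Subtype.finite
    exact AddSubgroup.eq_top_of_card_eq _ (by rw [hcardrange]; rfl)
  -- conclude
  have hsurj : ∀ q : (Γ₁ ×ₗ ℤ) ⧸ Δ, ∃ b : ℤ, φ b = q := by
    intro q
    have : q ∈ φ.range := hrange ▸ AddSubgroup.mem_top q
    exact this
  obtain ⟨b, hb⟩ := hsurj (-(QuotientAddGroup.mk' Δ (toLex (g, 0))))
  refine ⟨b, ?_⟩
  have : QuotientAddGroup.mk' Δ (toLex (g, (0:ℤ)) + f b) = 0 := by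
    rw [map_add]
    have : QuotientAddGroup.mk' Δ (f b) = φ b := rfl
    rw [this, hb, add_neg_cancel]
  rw [QuotientAddGroup.mk'_apply, QuotientAddGroup.eq_zero_iff] at this
  have heq : toLex (g, (0:ℤ)) + f b = toLex (g, b) := by
    show toLex (g + 0, 0 + b) = toLex (g, b)
    rw [add_zero, zero_add]
  rwa [heq] at this
end

section
/- Let Γ = ℤⁿ equipped with the lexicographic order and let Δ be a subgroup of Γ of finite index with ε(Γ|Δ) = (Γ : Δ). Then there exist integers a_{i,j}, for 1 ≤ i ≤ n−1 and i+1 ≤ j ≤ n, such that the vectors (1, a_{1,2}, …, a_{1,n}), (0, 1, a_{2,3}, …, a_{2,n}), …, (0, …, 0, 1, a_{n-1,n}) all belong to Δ. -/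
noncomputable instance (n : ℕ) : IsOrderedAddMonoid (Lex (Fin n → ℤ)) :=
  inferInstance

/-- Let `Γ = ℤⁿ` with the lexicographic order and `Δ ≤ Γ` of finite
index with `ε(Γ|Δ) = (Γ : Δ)`.  Then there are integers `a i j` (for `i < n - 1`,
`j > i`) such that the vectors `(0, …, 0, 1, a_{i,i+1}, …, a_{i,n-1})` (with the `1` in
position `i`) belong to `Δ` for every `i < n - 1`. -/
theorem stmt6 (n : ℕ) (Δ : AddSubgroup (Lex (Fin n → ℤ))) (hΔ : Δ.index ≠ 0)
    (hε : ({g : Lex (Fin n → ℤ) | 0 ≤ g ∧ ∀ δ ∈ Δ, 0 < δ → g < δ}).ncard = Δ.index) :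
    ∃ a : Fin n → Fin n → ℤ, ∀ i : Fin n, (i : ℕ) + 1 < n →
      toLex (fun j : Fin n => if j < i then 0 else if j = i then 1 else a i j) ∈ Δ := by
  letI LI : LinearOrder (Lex (Fin n → ℤ)) :=
    (inferInstance : LinearOrder (Lex (Fin n → ℤ)))
  set S := {g : Lex (Fin n → ℤ) | 0 ≤ g ∧ ∀ δ ∈ Δ, 0 < δ → g < δ} with hS
  -- the natural map from `S` to the quotient is injective
  let f : S → Lex (Fin n → ℤ) ⧸ Δ := fun s => QuotientAddGroup.mk s.1
  have hinj : Function.Injective f := by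
    rintro ⟨s, hs0, hs⟩ ⟨t, ht0, ht⟩ h
    have hmem : -s + t ∈ Δ := (QuotientAddGroup.eq).mp h
    refine Subtype.ext ?_
    rcases lt_trichotomy s t with hlt | heq | hlt
    · exfalso
      have hpos : (0 : Lex (Fin n → ℤ)) < -s + t := by
        rwa [neg_add_eq_sub, sub_pos]
      have h2 := ht _ hmem hpos
      rw [neg_add_eq_sub, lt_sub_iff_add_lt] at h2
      exact absurd (add_lt_iff_neg_left.mp h2) (not_lt.mpr hs0)
    · exact heq
    · exfalso
      have hmem' : -t + s ∈ Δ := by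
        have := Δ.neg_mem hmem
        rwa [neg_add_rev, neg_neg] at this
      have hpos : (0 : Lex (Fin n → ℤ)) < -t + s := by
        rwa [neg_add_eq_sub, sub_pos]
      have h2 := hs _ hmem' hpos
      rw [neg_add_eq_sub, lt_sub_iff_add_lt] at h2
      exact absurd (add_lt_iff_neg_left.mp h2) (not_lt.mpr ht0)
  -- the quotient is finite and has the same cardinality as `S`, so the map is surjective
  have hfinQ : Finite (Lex (Fin n → ℤ) ⧸ Δ) := by
    have : Nat.card (Lex (Fin n → ℤ) ⧸ Δ) ≠ 0 := hΔ
    exact (Nat.card_ne_zero.mp this).2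
  have hcard : Nat.card S = Nat.card (Lex (Fin n → ℤ) ⧸ Δ) := by
    rw [Nat.card_coe_set_eq, hε]; rfl
  have hsurj : Function.Surjective f :=
    ((Nat.bijective_iff_injective_and_card f).mpr ⟨hinj, hcard⟩).2
  -- it suffices to prove the membership for each `i` separately
  suffices h : ∀ i : Fin n, (i : ℕ) + 1 < n → ∃ b : Fin n → ℤ,
      toLex (fun j : Fin n => if j < i then 0 else if j = i then 1 else b j) ∈ Δ by
    choose b hb using h
    refine ⟨fun i => if hi : (i : ℕ) + 1 < n then b i hi else 0, fun i hi => ?_⟩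
    simpa [hi] using hb i hi
  intro i hi
  -- the positive element `δp := Δ.index • e_{i+1}` of `Δ`
  set k : Fin n := ⟨(i : ℕ) + 1, hi⟩ with hk
  set δp : Lex (Fin n → ℤ) :=
    Δ.index • toLex (fun j : Fin n => if j = k then (1 : ℤ) else 0) with hδp
  have hδpcoord : ∀ j : Fin n, ofLex δp j = Δ.index • (if j = k then (1 : ℤ) else 0) :=
    fun j => rfl
  have hδpzero : ∀ j : Fin n, j ≠ k → ofLex δp j = 0 := by
    intro j hj
    rw [hδpcoord j, if_neg hj, smul_zero]
  have hδpk : ofLex δp k = (Δ.index : ℤ) := by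
    rw [hδpcoord k, if_pos rfl]
    simp
  have hδpmem : δp ∈ Δ := AddSubgroup.nsmul_index_mem Δ _
  have hindpos : (0 : ℤ) < (Δ.index : ℤ) := by positivity
  have hδppos : (0 : Lex (Fin n → ℤ)) < δp := by
    refine ⟨k, fun j hj => ?_, ?_⟩
    · exact (hδpzero j (Fin.ne_of_lt hj)).symm
    · exact lt_of_lt_of_le hindpos (le_of_eq hδpk.symm)
  -- the element `e_i` and a representative `s ∈ S` of its coset
  set ei : Lex (Fin n → ℤ) := toLex (fun j : Fin n => if j = i then 1 else 0) with hei
  obtain ⟨⟨s, hs0, hs⟩, hfs⟩ := hsurj (QuotientAddGroup.mk ei)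
  have hsδ : s < δp := hs _ hδpmem hδppos
  -- every element of `S` vanishes below `k`, i.e. at positions `≤ i`
  have hszero : ∀ j : Fin n, j < k → ofLex s j = 0 := by
    obtain ⟨l, hl, hll⟩ := hsδ
    have hl' : ∀ j : Fin n, j < l → ofLex s j = ofLex δp j := hl
    have hll' : ofLex s l < ofLex δp l := hll
    rcases lt_trichotomy l k with hlk | hlk | hlk
    · exfalso
      have hlval : ofLex s l < 0 := by
        rw [hδpzero l (Fin.ne_of_lt hlk)] at hll'
        exact hll'
      have hneg : s < (0 : Lex (Fin n → ℤ)) :=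
        ⟨l, fun j hj => (hl' j hj).trans (hδpzero j (Fin.ne_of_lt (hj.trans hlk))), hlval⟩
      exact absurd hneg (not_lt.mpr hs0)
    · intro j hj
      exact (hl' j (hlk ▸ hj)).trans (hδpzero j (Fin.ne_of_lt hj))
    · intro j hj
      exact (hl' j (hj.trans hlk)).trans (hδpzero j (Fin.ne_of_lt hj))
  -- `-s + ei ∈ Δ` has the required shape
  have hmem : -s + ei ∈ Δ := (QuotientAddGroup.eq).mp hfs
  refine ⟨fun j => ofLex (-s + ei) j, ?_⟩
  have heq : (fun j : Fin n => if j < i then (0 : ℤ) else if j = i then 1 else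
      ofLex (-s + ei) j) = fun j : Fin n => ofLex (-s + ei) j := by
    funext j
    have hcoord : ofLex (-s + ei) j = -(ofLex s j) + (if j = i then 1 else 0) := rfl
    rcases lt_trichotomy j i with hj | hj | hj
    · have hjk : j < k := by
        simp only [hk, Fin.lt_def]; omega
      rw [if_pos hj, hcoord, hszero j hjk, if_neg (Fin.ne_of_lt hj)]
      simp
    · have hjk : j < k := by
        simp only [hk, Fin.lt_def]; omega
      rw [if_neg (lt_irrefl _ ∘ (hj ▸ ·)), if_pos hj, hcoord, hszero j hjk, if_pos hj]
      simp
    · rw [if_neg (not_lt.mpr (le_of_lt hj)), if_neg (Fin.ne_of_gt hj)]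
  rw [show toLex (fun j : Fin n => if j < i then (0 : ℤ) else if j = i then 1 else
      ofLex (-s + ei) j) = -s + ei from heq ▸ rfl]
  exact hmem
end

section
/- Let Γ = ℤⁿ equipped with the lexicographic order and let Δ be a subgroup of Γ of finite index. If there exist integers a_{i,j}, for 1 ≤ i ≤ n−1 and i+1 ≤ j ≤ n, such that the vectors (1, a_{1,2}, …, a_{1,n}), (0, 1, a_{2,3}, …, a_{2,n}), …, (0, …, 0, 1, a_{n-1,n}) all belong to Δ, then ε(Γ|Δ) = (Γ : Δ). -/
noncomputable instance (n : ℕ) : IsOrderedCancelAddMonoid (Lex (Fin n → ℤ)) :=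
  inferInstance

/-- Let `Γ = ℤⁿ` with the lexicographic order and `Δ ≤ Γ` of finite
index.  If there are integers `a i j` such that for every `i < n - 1` the vector
`(0, …, 0, 1, a_{i,i+1}, …, a_{i,n-1})` (with the `1` in position `i`) belongs to `Δ`,
then `ε(Γ|Δ) = (Γ : Δ)`. -/
theorem stmt7 (n : ℕ) (Δ : AddSubgroup (Lex (Fin n → ℤ))) (hΔ : Δ.index ≠ 0)
    (a : Fin n → Fin n → ℤ)
    (ha : ∀ i : Fin n, (i : ℕ) + 1 < n →
      toLex (fun j : Fin n => if j < i then 0 else if j = i then 1 else a i j) ∈ Δ) :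
    ({g : Lex (Fin n → ℤ) | 0 ≤ g ∧ ∀ δ ∈ Δ, 0 < δ → g < δ}).ncard = Δ.index := by
  classical
  cases n with
  | zero =>
    haveI hsub : Subsingleton (Lex (Fin 0 → ℤ)) :=
      ⟨fun x y => by
        have : ofLex x = ofLex y := Subsingleton.elim _ _
        simpa using congrArg toLex this⟩
    have hΔtop : Δ = ⊤ := Subsingleton.elim _ _
    have hS : {g : Lex (Fin 0 → ℤ) | 0 ≤ g ∧ ∀ δ ∈ Δ, 0 < δ → g < δ} = {0} := by
      ext g
      simp only [Set.mem_setOf_eq, Set.mem_singleton_iff]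
      constructor
      · intro _; exact Subsingleton.elim _ _
      · rintro rfl
        refine ⟨le_refl _, fun δ _ hδ => ?_⟩
        exact (absurd (Subsingleton.elim (0 : Lex (Fin 0 → ℤ)) δ ▸ hδ) (lt_irrefl _))
    rw [hS, hΔtop, AddSubgroup.index_top, Set.ncard_singleton]
  | succ N =>
    set L : Fin (N + 1) := Fin.last N with hLdef
    set eL : Lex (Fin (N + 1) → ℤ) := toLex (Pi.single L 1) with heL
    -- scalar multiples of eL
    have hsmul : ∀ k : ℤ, k • eL = toLex (Pi.single L k) := by
      intro k
      have h1 : k • (Pi.single L 1 : Fin (N+1) → ℤ) = Pi.single L k := by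
        funext j
        by_cases hj : j = L
        · subst hj; simp
        · simp [Pi.single_apply, hj]
      calc k • eL = toLex (k • (Pi.single L 1 : Fin (N+1) → ℤ)) := rfl
        _ = toLex (Pi.single L k) := congrArg toLex h1
    -- functions that vanish below L equal single L of their last value
    have hsingle : ∀ g : Fin (N + 1) → ℤ, (∀ j, j < L → g j = 0) →
        g = Pi.single L (g L) := by
      intro g hg
      funext j
      by_cases hj : j = L
      · subst hj; simp
      · have hjL : j < L := lt_of_le_of_ne (Fin.le_last j) hj
        simp [Pi.single_apply, hj, hg j hjL]
    haveI : Δ.FiniteIndex := ⟨hΔ⟩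
    -- existence of a positive multiple of eL in Δ
    have hex : ∃ k : ℕ, 0 < k ∧ (k : ℤ) • eL ∈ Δ := by
      refine ⟨Δ.index, Nat.pos_of_ne_zero hΔ, ?_⟩
      rw [natCast_zsmul]
      exact AddSubgroup.nsmul_index_mem Δ eL
    set m : ℕ := Nat.find hex with hmdef
    obtain ⟨hmpos, hmmem⟩ : 0 < m ∧ (m : ℤ) • eL ∈ Δ := Nat.find_spec hex
    have hmin : ∀ k : ℤ, 0 ≤ k → k < m → k • eL ∈ Δ → k = 0 := by
      intro k hk0 hkm hkmem
      by_contra hk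
      have hkpos : 0 < k.toNat := by omega
      have : ¬(0 < k.toNat ∧ (k.toNat : ℤ) • eL ∈ Δ) := Nat.find_min hex (by omega)
      exact this ⟨hkpos, by rwa [Int.toNat_of_nonneg hk0]⟩
    -- reduction: any vector is congruent mod Δ to a multiple of eL
    have hred : ∀ i : Fin (N + 1), ∀ g : Fin (N + 1) → ℤ, (∀ j, j < i → g j = 0) →
        ∃ c : ℤ, toLex g - c • eL ∈ Δ := by
      intro i
      induction i using Fin.reverseInduction with
      | last =>
        intro g hg
        refine ⟨g L, ?_⟩
        have : toLex g = (g L) • eL := by rw [hsmul]; exact congrArg toLex (hsingle g hg)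
        rw [this, sub_self]
        exact Δ.zero_mem
      | cast i ih =>
        intro g hg
        have hiN : ((i.castSucc : Fin (N+1)) : ℕ) + 1 < N + 1 := by
          simp only [Fin.coe_castSucc]; exact Nat.succ_lt_succ i.isLt
        have hv := ha i.castSucc hiN
        set v : Fin (N + 1) → ℤ :=
          fun j => if j < i.castSucc then 0 else if j = i.castSucc then 1 else a i.castSucc j
          with hvdef
        have hg' : ∀ j, j < i.succ → (g - (g i.castSucc) • v) j = 0 := by
          intro j hj
          have hj' : (j : ℕ) ≤ (i : ℕ) := by
            have := hj
            simp only [Fin.lt_def, Fin.val_succ] at this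
            omega
          rcases lt_or_eq_of_le hj' with h | h
          · have hjlt : j < i.castSucc := by simpa [Fin.lt_def, Fin.coe_castSucc] using h
            simp [Pi.sub_apply, Pi.smul_apply, smul_eq_mul, hg j hjlt, hvdef, hjlt]
          · have hje : j = i.castSucc := Fin.ext (by simpa [Fin.coe_castSucc] using h)
            subst hje
            simp [Pi.sub_apply, Pi.smul_apply, smul_eq_mul, hvdef]
        obtain ⟨c, hc⟩ := ih (g - (g i.castSucc) • v) hg'
        refine ⟨c, ?_⟩
        have halg : toLex g - c • eL =
            (toLex (g - (g i.castSucc) • v) - c • eL) + (g i.castSucc) • toLex v := by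
          have h4 : toLex (g - (g i.castSucc) • v) = toLex g - (g i.castSucc) • toLex v := rfl
          rw [h4]; abel
        rw [halg]
        exact Δ.add_mem hc (Δ.zsmul_mem hv _)
    -- lt criterion restated
    have hlt : ∀ x y : Lex (Fin (N + 1) → ℤ), x < y ↔
        ∃ i, (∀ j, j < i → ofLex x j = ofLex y j) ∧ ofLex x i < ofLex y i := fun _ _ => Iff.rfl
    have hofsingle : ∀ (k : ℤ) (j : Fin (N+1)), j ≠ L → ofLex (k • eL) j = 0 := by
      intro k j hj
      rw [hsmul]
      simp [Pi.single_apply, hj]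
    have hofsingleL : ∀ k : ℤ, ofLex (k • eL) L = k := by
      intro k; rw [hsmul]; simp
    -- positivity of k • eL for 0 < k
    have hposk : ∀ k : ℤ, 0 < k → (0 : Lex (Fin (N+1) → ℤ)) < k • eL := by
      intro k hk
      rw [hlt]
      refine ⟨L, fun j hj => ?_, ?_⟩
      · rw [hofsingle k j (ne_of_lt hj)]; rfl
      · rw [hofsingleL]; exact hk
    -- elements of Δ supported at L are multiples of eL
    have hdelta_single : ∀ δ : Lex (Fin (N+1) → ℤ), (∀ j, j < L → ofLex δ j = 0) →
        δ = (ofLex δ L) • eL := by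
      intro δ hδ
      rw [hsmul]
      have := hsingle (ofLex δ) hδ
      calc δ = toLex (ofLex δ) := rfl
        _ = toLex (Pi.single L (ofLex δ L)) := congrArg toLex this
    -- the key set equality
    have hS : {g : Lex (Fin (N+1) → ℤ) | 0 ≤ g ∧ ∀ δ ∈ Δ, 0 < δ → g < δ} =
        (fun k : ℤ => k • eL) '' Set.Ico (0 : ℤ) (m : ℤ) := by
      ext g
      simp only [Set.mem_setOf_eq, Set.mem_image, Set.mem_Ico]
      constructor
      · rintro ⟨hg0, hgδ⟩
        have hδ0 : (0 : Lex (Fin (N+1) → ℤ)) < (m : ℤ) • eL := hposk _ (by exact_mod_cast hmpos)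
        have hglt : g < (m : ℤ) • eL := hgδ _ hmmem hδ0
        obtain ⟨i, hib, hii⟩ := (hlt _ _).mp hglt
        have hiL : i = L := by
          by_contra hne
          have hgi_neg : ofLex g i < 0 := by rw [hofsingle _ _ hne] at hii; exact hii
          rcases lt_or_eq_of_le hg0 with hg0' | hg0'
          · obtain ⟨i', hib', hii'⟩ := (hlt _ _).mp hg0'
            have hz : ∀ j, j < i' → ofLex g j = 0 := fun j hj => (hib' j hj).symm
            rcases lt_trichotomy i' i with h | h | h
            · have : ofLex g i' = ofLex ((m:ℤ) • eL) i' := hib i' h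
              rw [hofsingle _ _ (ne_of_lt (lt_of_lt_of_le h (Fin.le_last i)))] at this
              rw [this] at hii'; exact lt_irrefl _ hii'
            · subst h; exact absurd (hii'.trans hgi_neg) (lt_irrefl _)
            · have : ofLex g i = 0 := hz i h
              rw [this] at hgi_neg; exact lt_irrefl _ hgi_neg
          · rw [← hg0'] at hgi_neg
            exact absurd hgi_neg (lt_irrefl _)
        subst hiL
        have hzero : ∀ j, j < L → ofLex g j = 0 := by
          intro j hj
          have := hib j hj
          rw [hofsingle _ _ (ne_of_lt hj)] at this
          exact this
        have hgform : g = (ofLex g L) • eL := hdelta_single g hzero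
        refine ⟨ofLex g L, ⟨?_, ?_⟩, hgform.symm⟩
        · rcases lt_or_eq_of_le hg0 with hg0' | hg0'
          · obtain ⟨i', hib', hii'⟩ := (hlt _ _).mp hg0'
            have hi'L : i' = L := by
              by_contra hne
              have : ofLex g i' = 0 := hzero i' (lt_of_le_of_ne (Fin.le_last i') hne)
              rw [this] at hii'; exact lt_irrefl _ hii'
            subst hi'L
            exact le_of_lt hii'
          · rw [← hg0']; rfl
        · rw [hofsingleL] at hii
          exact hii
      · rintro ⟨k, ⟨hk0, hkm⟩, rfl⟩
        constructor
        · rcases lt_or_eq_of_le hk0 with hk0' | hk0'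
          · exact le_of_lt (hposk k hk0')
          · rw [← hk0', zero_smul]
        · intro δ hδ hδpos
          obtain ⟨i, hib, hii⟩ := (hlt _ _).mp hδpos
          have hzb : ∀ j, j < i → ofLex δ j = 0 := fun j hj => (hib j hj).symm
          have hii' : 0 < ofLex δ i := hii
          by_cases hiL : i = L
          · subst hiL
            have hδform : δ = (ofLex δ L) • eL := hdelta_single δ hzb
            have hmle : (m : ℤ) ≤ ofLex δ L := by
              by_contra hlt'
              push_neg at hlt'
              have := hmin (ofLex δ L) (le_of_lt hii') hlt' (hδform ▸ hδ)
              omega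
            rw [hlt]
            refine ⟨L, fun j hj => ?_, ?_⟩
            · rw [hofsingle _ _ (ne_of_lt hj), hzb j hj]
            · rw [hofsingleL]; omega
          · rw [hlt]
            refine ⟨i, fun j hj => ?_, ?_⟩
            · have hjL : j ≠ L := ne_of_lt (lt_of_lt_of_le hj (Fin.le_last i))
              rw [hofsingle _ _ hjL, hzb j hj]
            · rw [hofsingle _ _ hiL]
              exact hii'
    -- injectivity of k ↦ k • eL
    have hinj : Function.Injective (fun k : ℤ => k • eL) := by
      intro k k' h
      have h2 := congrArg (fun x : Lex (Fin (N+1) → ℤ) => ofLex x L) h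
      simp only at h2
      rwa [hofsingleL, hofsingleL] at h2
    -- cardinality of the set
    have hcardS : ({g : Lex (Fin (N+1) → ℤ) | 0 ≤ g ∧ ∀ δ ∈ Δ, 0 < δ → g < δ}).ncard = m := by
      rw [hS, Set.ncard_image_of_injective _ hinj, ← Finset.coe_Ico, Set.ncard_coe_finset,
        Int.card_Ico]
      simp
    -- the quotient has cardinality m
    have hquot : Δ.index = m := by
      have hφ : Function.Bijective
          (fun k : Fin m => (QuotientAddGroup.mk ((k : ℤ) • eL) : Lex (Fin (N+1) → ℤ) ⧸ Δ)) := by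
        constructor
        · intro k k' h
          rw [QuotientAddGroup.eq] at h
          have hmem : ((k' : ℤ) - (k : ℤ)) • eL ∈ Δ := by
            have : -((k : ℤ) • eL) + (k' : ℤ) • eL = ((k' : ℤ) - (k : ℤ)) • eL := by
              rw [sub_smul]; abel
            rwa [this] at h
          have key : ∀ s t : Fin m, ((s : ℤ) ≤ (t : ℤ)) → ((t : ℤ) - (s : ℤ)) • eL ∈ Δ → s = t := by
            intro s t hst hmem'
            have h0 : (0 : ℤ) ≤ (t : ℤ) - (s : ℤ) := by omega
            have h1 : ((t : ℤ) - (s : ℤ)) < m := by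
              have := t.isLt; have := s.isLt; omega
            have := hmin _ h0 h1 hmem'
            have : (s : ℤ) = (t : ℤ) := by omega
            exact Fin.ext (by exact_mod_cast this)
          rcases le_total ((k : ℤ)) ((k' : ℤ)) with hle | hle
          · exact key k k' hle hmem
          · refine (key k' k hle ?_).symm
            have : -(((k' : ℤ) - (k : ℤ)) • eL) = ((k : ℤ) - (k' : ℤ)) • eL := by
              rw [← neg_smul]; ring_nf
            rw [← this]
            exact Δ.neg_mem hmem
        · intro q
          obtain ⟨x, rfl⟩ := QuotientAddGroup.mk_surjective q
          obtain ⟨c, hc⟩ := hred 0 (ofLex x) (fun j hj => absurd hj (Fin.not_lt_zero j))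
          have hc' : x - c • eL ∈ Δ := hc
          set r : ℤ := c % (m : ℤ) with hrdef
          have hr0 : 0 ≤ r := Int.emod_nonneg c (by exact_mod_cast hmpos.ne')
          have hrm : r < (m : ℤ) := Int.emod_lt_of_pos c (by exact_mod_cast hmpos)
          refine ⟨⟨r.toNat, by omega⟩, ?_⟩
          rw [QuotientAddGroup.eq]

          have hx : -((((⟨r.toNat, by omega⟩ : Fin m) : ℤ)) • eL) + x
              = (x - c • eL) + (c / (m : ℤ)) • ((m : ℤ) • eL) := by
            have hcoe : (((⟨r.toNat, by omega⟩ : Fin m) : ℤ)) = r := by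
              simp [Int.toNat_of_nonneg hr0]
            rw [hcoe, smul_smul]
            have hdiv : (c / (m : ℤ)) * (m : ℤ) = c - r := by
              have h3 := Int.emod_add_mul_ediv c (m : ℤ)
              rw [mul_comm]
              omega
            rw [hdiv, sub_smul]
            abel
          rw [hx]
          exact Δ.add_mem hc' (Δ.zsmul_mem hmmem _)
      calc Δ.index = Nat.card (Lex (Fin (N+1) → ℤ) ⧸ Δ) := rfl
        _ = Nat.card (Fin m) := (Nat.card_eq_of_bijective _ hφ).symm
        _ = m := by simp
    rw [hcardS, hquot]
end

section
/- Let Δ ⊆ Σ ⊆ Γ be linearly ordered abelian groups, where Δ is a subgroup of Σ of finite index and Σ is a subgroup of Γ of finite index. Then the initial index is multiplicative: ε(Γ|Σ) · ε(Σ|Δ) = ε(Γ|Δ). -/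
/-- Let `Δ ≤ T ≤ Γ` be linearly ordered abelian groups, `Δ` of finite
index in `T` and `T` of finite index in `Γ`.  Then the initial index is multiplicative:
`ε(Γ|T) · ε(T|Δ) = ε(Γ|Δ)`. -/
theorem stmt8 (Γ : Type*) [AddCommGroup Γ] [LinearOrder Γ] [IsOrderedAddMonoid Γ] (T Δ : AddSubgroup Γ)
    (hΔT : Δ ≤ T) (hT : T.index ≠ 0) (hΔ : (Δ.addSubgroupOf T).index ≠ 0) :
    ({γ : Γ | 0 ≤ γ ∧ ∀ δ ∈ T, 0 < δ → γ < δ}).ncard *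
      ({γ : Γ | γ ∈ T ∧ 0 ≤ γ ∧ ∀ δ ∈ Δ, 0 < δ → γ < δ}).ncard =
    ({γ : Γ | 0 ≤ γ ∧ ∀ δ ∈ Δ, 0 < δ → γ < δ}).ncard := by
  set A := {γ : Γ | 0 ≤ γ ∧ ∀ δ ∈ T, 0 < δ → γ < δ} with hAdef
  set B := {γ : Γ | γ ∈ T ∧ 0 ≤ γ ∧ ∀ δ ∈ Δ, 0 < δ → γ < δ} with hBdef
  set C := {γ : Γ | 0 ≤ γ ∧ ∀ δ ∈ Δ, 0 < δ → γ < δ} with hCdef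
  -- the quotient `T ⧸ Δ` is finite
  haveI hQfin : Finite (T ⧸ Δ.addSubgroupOf T) := by
    rw [AddSubgroup.index_eq_card] at hΔ
    exact Nat.finite_of_card_ne_zero hΔ
  -- `B` is finite, since it injects into `T ⧸ Δ`
  have hBfin : B.Finite := by
    have hinj : Function.Injective
        (fun b : B => (QuotientAddGroup.mk ⟨b.1, b.2.1⟩ : T ⧸ Δ.addSubgroupOf T)) := by
      rintro ⟨x, hxT, hx0, hxΔ⟩ ⟨y, hyT, hy0, hyΔ⟩ h
      simp only [QuotientAddGroup.eq, AddSubgroup.mem_addSubgroupOf] at h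
      have hmem : y - x ∈ Δ := by simpa [neg_add_eq_sub] using h
      have hxy : x = y := by
        rcases lt_trichotomy x y with hlt | heq | hlt
        · have h1 := hyΔ (y - x) hmem (sub_pos.mpr hlt)
          exact absurd h1 (not_lt.mpr (sub_le_self y hx0))
        · exact heq
        · have hmem' : x - y ∈ Δ := by simpa using Δ.neg_mem hmem
          have h1 := hxΔ (x - y) hmem' (sub_pos.mpr hlt)
          exact absurd h1 (not_lt.mpr (sub_le_self x hy0))
      simpa using hxy
    have : Finite B := Finite.of_injective _ hinj
    exact Set.finite_coe_iff.mp this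
  -- `C` is the image of `A ×ˢ B` under addition
  have key : C = (fun p : Γ × Γ => p.1 + p.2) '' (A ×ˢ B) := by
    ext γ
    constructor
    · rintro ⟨hγ0, hγΔ⟩
      set S := {t : Γ | t ∈ T ∧ 0 ≤ t ∧ t ≤ γ} with hSdef
      have hSsub : S ⊆ B := by
        rintro t ⟨htT, ht0, htγ⟩
        exact ⟨htT, ht0, fun δ hδ hδ0 => lt_of_le_of_lt htγ (hγΔ δ hδ hδ0)⟩
      have hSfin : S.Finite := hBfin.subset hSsub
      have hSne : S.Nonempty := ⟨0, T.zero_mem, le_refl 0, hγ0⟩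
      obtain ⟨b, hbS, hbmax'⟩ := Set.Finite.exists_maximalFor id S hSfin hSne
      have hbmax : ∀ t ∈ S, t ≤ b := by
        intro t htS
        by_contra hc
        push_neg at hc
        exact absurd (hbmax' htS hc.le) (not_le.mpr hc)
      obtain ⟨hbT, hb0, hbγ⟩ := hbS
      refine ⟨(γ - b, b), ⟨⟨sub_nonneg.mpr hbγ, ?_⟩, hSsub ⟨hbT, hb0, hbγ⟩⟩, by simp⟩
      intro δ hδ hδ0
      by_contra hc
      push_neg at hc
      have hmem : b + δ ∈ S := by
        refine ⟨T.add_mem hbT hδ, add_nonneg hb0 hδ0.le, ?_⟩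
        have := le_sub_iff_add_le.mp hc
        rwa [add_comm] at this
      have h2 := hbmax _ hmem
      exact absurd ((add_le_iff_nonpos_right b).mp h2) (not_le.mpr hδ0)
    · rintro ⟨⟨a, b⟩, ⟨⟨ha0, haT⟩, hbT, hb0, hbΔ⟩, rfl⟩
      refine ⟨add_nonneg ha0 hb0, ?_⟩
      intro δ hδ hδ0
      have hbδ : b < δ := hbΔ δ hδ hδ0
      have h1 : a < δ - b := haT (δ - b) (T.sub_mem (hΔT hδ) hbT) (sub_pos.mpr hbδ)
      exact lt_sub_iff_add_lt.mp h1
  -- addition is injective on `A ×ˢ B`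
  have hinjOn : Set.InjOn (fun p : Γ × Γ => p.1 + p.2) (A ×ˢ B) := by
    rintro ⟨a, b⟩ ⟨⟨ha0, haT⟩, hbT, hb0, hbΔ⟩ ⟨a', b'⟩ ⟨⟨ha0', haT'⟩, hbT', hb0', hbΔ'⟩ h
    simp only at h
    have hbb : b = b' := by
      rcases lt_trichotomy b b' with hlt | heq | hlt
      · have h1 : a < b' - b := haT (b' - b) (T.sub_mem hbT' hbT) (sub_pos.mpr hlt)
        have h2 : b' ≤ a + b := h ▸ le_add_of_nonneg_left ha0'
        exact absurd (sub_le_iff_le_add.mpr h2) (not_le.mpr h1)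
      · exact heq
      · have h1 : a' < b - b' := haT' (b - b') (T.sub_mem hbT hbT') (sub_pos.mpr hlt)
        have h2 : b ≤ a' + b' := h ▸ le_add_of_nonneg_left ha0
        exact absurd (sub_le_iff_le_add.mpr h2) (not_le.mpr h1)
    have haa : a = a' := by
      rw [hbb] at h
      exact add_right_cancel h
    simp [haa, hbb]
  rw [key, Set.ncard_image_of_injOn hinjOn]
  rw [← Nat.card_coe_set_eq, ← Nat.card_coe_set_eq, ← Nat.card_coe_set_eq,
      Nat.card_congr (Equiv.Set.prod A B), Nat.card_prod]
end

section
/- Let Δ ⊆ Σ ⊆ Γ be linearly ordered abelian groups, where Δ is a subgroup of Σ of finite index and Σ is a subgroup of Γ of finite index. Then ε(Γ|Δ) = (Γ : Δ) if and only if both ε(Γ|Σ) = (Γ : Σ) and ε(Σ|Δ) = (Σ : Δ). -/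
open Set

private lemma stmt9_aux {G : Type*} [AddCommGroup G] [LinearOrder G] [IsOrderedAddMonoid G] (H : AddSubgroup G)
    (hH : H.index ≠ 0) :
    ({γ : G | 0 ≤ γ ∧ ∀ δ ∈ H, 0 < δ → γ < δ}).Finite ∧
    ({γ : G | 0 ≤ γ ∧ ∀ δ ∈ H, 0 < δ → γ < δ}).ncard ≤ H.index := by
  set S := {γ : G | 0 ≤ γ ∧ ∀ δ ∈ H, 0 < δ → γ < δ} with hS
  have hfinQ : Finite (G ⧸ H) := by
    rw [AddSubgroup.index_eq_card] at hH
    exact (Nat.card_ne_zero.mp hH).2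
  have hinj : Set.InjOn (QuotientAddGroup.mk (s := H)) S := by
    intro a ha b hb hab
    rcases lt_trichotomy a b with h | h | h
    · exact absurd (hb.2 _ (QuotientAddGroup.eq_iff_sub_mem.mp hab.symm) (sub_pos.mpr h))
        (not_lt.mpr (sub_le_self b ha.1))
    · exact h
    · exact absurd (ha.2 _ (QuotientAddGroup.eq_iff_sub_mem.mp hab) (sub_pos.mpr h))
        (not_lt.mpr (sub_le_self a hb.1))
  have hfin : S.Finite := by
    have : (QuotientAddGroup.mk (s := H) '' S).Finite := Set.toFinite _
    exact Set.Finite.of_finite_image this hinj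
  refine ⟨hfin, ?_⟩
  calc S.ncard = (QuotientAddGroup.mk (s := H) '' S).ncard :=
        (Set.ncard_image_of_injOn hinj).symm
    _ ≤ (Set.univ : Set (G ⧸ H)).ncard :=
        Set.ncard_le_ncard (Set.subset_univ _) (Set.toFinite _)
    _ = Nat.card (G ⧸ H) := Set.ncard_univ _
    _ = H.index := (AddSubgroup.index_eq_card H).symm

private lemma stmt9_nat {a b A B : ℕ} (ha : a ≤ A) (hb : b ≤ B) (hA : A ≠ 0) (hB : B ≠ 0) :
    a * b = A * B ↔ a = A ∧ b = B := by
  have hA' := Nat.pos_of_ne_zero hA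
  have hB' := Nat.pos_of_ne_zero hB
  constructor
  · intro h
    constructor
    · by_contra hc
      have hlt : a < A := ha.lt_of_ne hc
      have : a * b < A * B :=
        lt_of_le_of_lt (Nat.mul_le_mul (le_refl a) hb) ((Nat.mul_lt_mul_right hB').mpr hlt)
      omega
    · by_contra hc
      have hlt : b < B := hb.lt_of_ne hc
      have : a * b < A * B :=
        lt_of_le_of_lt (Nat.mul_le_mul ha (le_refl b)) ((Nat.mul_lt_mul_left hA').mpr hlt)
      omega
  · rintro ⟨rfl, rfl⟩; rfl

/-- Let `Δ ≤ T ≤ Γ` be linearly ordered abelian groups, `Δ` of finite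
index in `T` and `T` of finite index in `Γ`.  Then `ε(Γ|Δ) = (Γ : Δ)` if and only if
`ε(Γ|T) = (Γ : T)` and `ε(T|Δ) = (T : Δ)`. -/
theorem stmt9 (Γ : Type*) [AddCommGroup Γ] [LinearOrder Γ] [IsOrderedAddMonoid Γ] (T Δ : AddSubgroup Γ)
    (hΔT : Δ ≤ T) (hT : T.index ≠ 0) (hΔ : (Δ.addSubgroupOf T).index ≠ 0) :
    ({γ : Γ | 0 ≤ γ ∧ ∀ δ ∈ Δ, 0 < δ → γ < δ}).ncard = Δ.index ↔
      (({γ : Γ | 0 ≤ γ ∧ ∀ δ ∈ T, 0 < δ → γ < δ}).ncard = T.index ∧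
       ({γ : Γ | γ ∈ T ∧ 0 ≤ γ ∧ ∀ δ ∈ Δ, 0 < δ → γ < δ}).ncard
          = (Δ.addSubgroupOf T).index) := by
  set S1 := {γ : Γ | 0 ≤ γ ∧ ∀ δ ∈ Δ, 0 < δ → γ < δ} with hS1
  set S2 := {γ : Γ | 0 ≤ γ ∧ ∀ δ ∈ T, 0 < δ → γ < δ} with hS2
  set S3 := {γ : Γ | γ ∈ T ∧ 0 ≤ γ ∧ ∀ δ ∈ Δ, 0 < δ → γ < δ} with hS3
  set S3' := {x : ↥T | 0 ≤ x ∧ ∀ δ ∈ Δ.addSubgroupOf T, 0 < δ → x < δ} with hS3'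
  -- index facts
  have hidx : Δ.index = T.index * (Δ.addSubgroupOf T).index := by
    have := AddSubgroup.relIndex_mul_index hΔT
    rw [AddSubgroup.relIndex] at this
    rw [← this, Nat.mul_comm]
  have hΔidx : Δ.index ≠ 0 := by
    rw [hidx]; exact Nat.mul_ne_zero hT hΔ
  -- S3 is the image of S3'
  have hS3img : S3 = Subtype.val '' S3' := by
    ext γ
    constructor
    · rintro ⟨hγT, hγ0, hγlt⟩
      refine ⟨⟨γ, hγT⟩, ⟨?_, ?_⟩, rfl⟩
      · exact hγ0
      · intro δ hδ hδ0
        exact hγlt δ hδ hδ0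
    · rintro ⟨⟨x, hxT⟩, ⟨hx0, hxlt⟩, rfl⟩
      refine ⟨hxT, hx0, ?_⟩
      intro δ hδ hδ0
      exact hxlt ⟨δ, hΔT hδ⟩ hδ hδ0
  have hS3card : S3.ncard = S3'.ncard := by
    rw [hS3img]; exact Set.ncard_image_of_injective _ Subtype.val_injective
  -- bounds and finiteness
  obtain ⟨hfin1, _⟩ := stmt9_aux Δ hΔidx
  obtain ⟨hfin2, hle2⟩ := stmt9_aux T hT
  obtain ⟨hfin3', hle3'⟩ := stmt9_aux (Δ.addSubgroupOf T) hΔ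
  have hle3 : S3.ncard ≤ (Δ.addSubgroupOf T).index := hS3card ▸ hle3'
  have hfin3 : S3.Finite := by
    rw [hS3img]; exact hfin3'.image _
  -- multiplicativity : S1 = add '' (S2 ×ˢ S3), injectively
  have hinj : Set.InjOn (fun p : Γ × Γ => p.1 + p.2) (S2 ×ˢ S3) := by
    rintro ⟨s₁, t₁⟩ ⟨hs₁, ht₁⟩ ⟨s₂, t₂⟩ ⟨hs₂, ht₂⟩ h
    simp only at h ⊢
    have hkey : s₁ = s₂ := by
      rcases lt_trichotomy s₁ s₂ with hlt | heq | hlt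
      · exfalso
        have hmem : s₂ - s₁ ∈ T := by
          have heq : s₂ - s₁ = t₁ - t₂ := by
            rw [sub_eq_sub_iff_add_eq_add, ← h]; abel
          rw [heq]; exact T.sub_mem ht₁.1 ht₂.1
        exact absurd (hs₂.2 _ hmem (sub_pos.mpr hlt)) (not_lt.mpr (sub_le_self s₂ hs₁.1))
      · exact heq
      · exfalso
        have hmem : s₁ - s₂ ∈ T := by
          have heq : s₁ - s₂ = t₂ - t₁ := by
            rw [sub_eq_sub_iff_add_eq_add, h]; abel
          rw [heq]; exact T.sub_mem ht₂.1 ht₁.1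
        exact absurd (hs₁.2 _ hmem (sub_pos.mpr hlt)) (not_lt.mpr (sub_le_self s₁ hs₂.1))
    refine Prod.ext hkey ?_
    simp only
    rw [hkey] at h
    exact add_left_cancel h
  have himg : S1 = (fun p : Γ × Γ => p.1 + p.2) '' (S2 ×ˢ S3) := by
    apply Set.Subset.antisymm
    · -- surjectivity: decompose γ via the minimum of its T-coset fiber
      intro γ hγ
      set F := {x : Γ | x ∈ S1 ∧ γ - x ∈ T} with hF
      have hγF : γ ∈ F := ⟨hγ, by simpa using T.zero_mem⟩
      have hFfin : F.Finite := hfin1.subset fun x hx => hx.1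
      obtain ⟨m, hmF, hmin⟩ := Set.exists_min_image F id hFfin ⟨γ, hγF⟩
      simp only [id] at hmin
      have hmγ : m ≤ γ := hmin γ hγF
      have hm2 : m ∈ S2 := by
        refine ⟨hmF.1.1, ?_⟩
        intro t ht ht0
        by_contra hc
        push_neg at hc
        have hmem : m - t ∈ F := by
          refine ⟨⟨sub_nonneg.mpr hc, ?_⟩, ?_⟩
          · intro δ hδ hδ0
            exact lt_of_le_of_lt (sub_le_self m ht0.le) (hmF.1.2 δ hδ hδ0)
          · have heq : γ - (m - t) = (γ - m) + t := by abel
            rw [heq]; exact T.add_mem hmF.2 ht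
        exact absurd (hmin _ hmem) (not_le.mpr (sub_lt_self m ht0))
      have hm3 : γ - m ∈ S3 := by
        refine ⟨hmF.2, sub_nonneg.mpr hmγ, ?_⟩
        intro δ hδ hδ0
        exact lt_of_le_of_lt (sub_le_self γ hmF.1.1) (hγ.2 δ hδ hδ0)
      exact ⟨⟨m, γ - m⟩, ⟨hm2, hm3⟩, by simp⟩
    · rintro γ ⟨⟨s, t⟩, ⟨hs, ht⟩, rfl⟩
      simp only
      refine ⟨add_nonneg hs.1 ht.2.1, ?_⟩
      intro δ hδ hδ0
      have h1 := ht.2.2 δ hδ hδ0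
      have h2 : s < δ - t := hs.2 _ (T.sub_mem (hΔT hδ) ht.1) (sub_pos.mpr h1)
      exact lt_sub_iff_add_lt.mp h2
  have hprodcard : (S2 ×ˢ S3).ncard = S2.ncard * S3.ncard := by
    rw [← Nat.card_coe_set_eq, ← Nat.card_coe_set_eq, ← Nat.card_coe_set_eq]
    rw [Nat.card_congr (Equiv.Set.prod S2 S3), Nat.card_prod]
  have hmul : S1.ncard = S2.ncard * S3.ncard := by
    rw [himg, Set.ncard_image_of_injOn hinj, hprodcard]
  rw [hmul, hidx, hS3card]
  exact stmt9_nat hle2 hle3' hT hΔ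
end

section
/- Let K ⊆ F ⊆ L be finite extensions of fields and let ω be a valuation on L, with μ its restriction to F and ν its restriction to K. If the valuation ring O_ω is essentially finitely generated over O_μ and O_μ is essentially finitely generated over O_ν, then O_ω is essentially finitely generated over O_ν; more precisely, if O_ω = O_μ[x₁,…,x_r] localized at the center of ω and O_μ = O_ν[y₁,…,y_s] localized at the center of μ, then O_ω = O_ν[x₁,…,x_r,y₁,…,y_s] localized at the center of ω. -/
/-- Let `K ⊆ F ⊆ L` be finite extensions of fields and `ω` a valuation
on `L`, with `μ` its restriction to `F` and `ν` its restriction to `K`.  If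
`O_ω = O_μ[x₁,…,x_r]` localized at the center of `ω` and `O_μ = O_ν[y₁,…,y_s]` localized
at the center of `μ`, then `O_ω = O_ν[x₁,…,x_r,y₁,…,y_s]` localized at the center of `ω`
(in particular `O_ω` is essentially finitely generated over `O_ν`).
Here, for a subring `R ⊆ O_ω` of `L`, "`O_ω` is the localization of `R` at the center
`m_ω ∩ R`" is expressed elementwise: `ω z ≤ 1 ↔ ∃ a b ∈ R, ω b = 1 ∧ b * z = a`. -/
theorem stmt11 (K F L : Type*) [Field K] [Field F] [Field L]
    [Algebra K F] [Algebra F L] [Algebra K L] [IsScalarTower K F L]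
    [FiniteDimensional K F] [FiniteDimensional F L]
    (Γ₀ : Type*) [LinearOrderedCommGroupWithZero Γ₀] (ω : Valuation L Γ₀)
    (r s : ℕ) (x : Fin r → L) (y : Fin s → F)
    (hx : ∀ i, ω (x i) ≤ 1) (hy : ∀ i, ω (algebraMap F L (y i)) ≤ 1)
    -- `O_ω = O_μ[x₁,…,x_r]` localized at the center of `ω`
    (hωμ : ∀ z : L, ω z ≤ 1 ↔
      ∃ a ∈ Subring.closure
          ((algebraMap F L) '' {t : F | ω (algebraMap F L t) ≤ 1} ∪ Set.range x),
        ∃ b ∈ Subring.closure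
          ((algebraMap F L) '' {t : F | ω (algebraMap F L t) ≤ 1} ∪ Set.range x),
          ω b = 1 ∧ b * z = a)
    -- `O_μ = O_ν[y₁,…,y_s]` localized at the center of `μ`
    (hμν : ∀ z : F, ω (algebraMap F L z) ≤ 1 ↔
      ∃ a ∈ Subring.closure
          ((algebraMap K F) '' {t : K | ω (algebraMap K L t) ≤ 1} ∪ Set.range y),
        ∃ b ∈ Subring.closure
          ((algebraMap K F) '' {t : K | ω (algebraMap K L t) ≤ 1} ∪ Set.range y),
          ω (algebraMap F L b) = 1 ∧ b * z = a) :
    -- `O_ω = O_ν[x₁,…,x_r,y₁,…,y_s]` localized at the center of `ω`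
    ∀ z : L, ω z ≤ 1 ↔
      ∃ a ∈ Subring.closure
          ((algebraMap K L) '' {t : K | ω (algebraMap K L t) ≤ 1} ∪
            (algebraMap F L) '' Set.range y ∪ Set.range x),
        ∃ b ∈ Subring.closure
          ((algebraMap K L) '' {t : K | ω (algebraMap K L t) ≤ 1} ∪
            (algebraMap F L) '' Set.range y ∪ Set.range x),
          ω b = 1 ∧ b * z = a := by
  intro z
  set T := Subring.closure
      ((algebraMap K L) '' {t : K | ω (algebraMap K L t) ≤ 1} ∪
        (algebraMap F L) '' Set.range y ∪ Set.range x) with hT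
  -- every element of T has valuation ≤ 1
  have hTle : ∀ u ∈ T, ω u ≤ 1 := by
    intro u hu
    induction hu using Subring.closure_induction with
    | mem v hv =>
      rcases hv with (⟨t, ht, rfl⟩ | ⟨t, ⟨i, rfl⟩, rfl⟩) | ⟨i, rfl⟩
      · exact ht
      · exact hy i
      · exact hx i
    | one => simp
    | zero => simp
    | add a b _ _ ha hb => exact le_trans (ω.map_add a b) (max_le ha hb)
    | neg a _ ha => rwa [ω.map_neg]
    | mul a b _ _ ha hb => rw [ω.map_mul]; exact mul_le_one' ha hb
  -- image of the K-side closure in F lands in T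
  have hmapT : ∀ w ∈ Subring.closure
      ((algebraMap K F) '' {t : K | ω (algebraMap K L t) ≤ 1} ∪ Set.range y),
      algebraMap F L w ∈ T := by
    intro w hw
    induction hw using Subring.closure_induction with
    | mem v hv =>
      rcases hv with ⟨t, ht, rfl⟩ | ⟨i, rfl⟩
      · rw [← IsScalarTower.algebraMap_apply K F L]
        exact Subring.subset_closure (Or.inl (Or.inl ⟨t, ht, rfl⟩))
      · exact Subring.subset_closure (Or.inl (Or.inr ⟨y i, ⟨i, rfl⟩, rfl⟩))
    | one => rw [map_one]; exact Subring.one_mem T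
    | zero => rw [map_zero]; exact Subring.zero_mem T
    | add a b _ _ ha hb => rw [map_add]; exact Subring.add_mem T ha hb
    | neg a _ ha => rw [map_neg]; exact Subring.neg_mem T ha
    | mul a b _ _ ha hb => rw [map_mul]; exact Subring.mul_mem T ha hb
  -- denominator clearing
  have hclear : ∀ u ∈ Subring.closure
      ((algebraMap F L) '' {t : F | ω (algebraMap F L t) ≤ 1} ∪ Set.range x),
      ∃ c ∈ T, ω c = 1 ∧ c * u ∈ T := by
    intro u hu
    induction hu using Subring.closure_induction with
    | mem v hv =>
      rcases hv with ⟨t, ht, rfl⟩ | ⟨i, rfl⟩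
      · obtain ⟨a, ha, b, hb, hb1, hab⟩ := (hμν t).mp ht
        refine ⟨algebraMap F L b, hmapT b hb, hb1, ?_⟩
        rw [← map_mul, hab]
        exact hmapT a ha
      · refine ⟨1, Subring.one_mem T, ω.map_one, ?_⟩
        rw [one_mul]
        exact Subring.subset_closure (Or.inr ⟨i, rfl⟩)
    | one => exact ⟨1, Subring.one_mem T, ω.map_one, by simpa using Subring.one_mem T⟩
    | zero => exact ⟨1, Subring.one_mem T, ω.map_one, by simpa using Subring.zero_mem T⟩
    | add a b _ _ ha hb =>
      obtain ⟨c1, hc1, hc11, hc1a⟩ := ha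
      obtain ⟨c2, hc2, hc21, hc2b⟩ := hb
      refine ⟨c1 * c2, Subring.mul_mem T hc1 hc2, by rw [ω.map_mul, hc11, hc21, one_mul], ?_⟩
      have : c1 * c2 * (a + b) = c2 * (c1 * a) + c1 * (c2 * b) := by ring
      rw [this]
      exact Subring.add_mem T (Subring.mul_mem T hc2 hc1a) (Subring.mul_mem T hc1 hc2b)
    | neg a _ ha =>
      obtain ⟨c, hc, hc1, hca⟩ := ha
      refine ⟨c, hc, hc1, ?_⟩
      rw [mul_neg]
      exact Subring.neg_mem T hca
    | mul a b _ _ ha hb =>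
      obtain ⟨c1, hc1, hc11, hc1a⟩ := ha
      obtain ⟨c2, hc2, hc21, hc2b⟩ := hb
      refine ⟨c1 * c2, Subring.mul_mem T hc1 hc2, by rw [ω.map_mul, hc11, hc21, one_mul], ?_⟩
      have : c1 * c2 * (a * b) = (c1 * a) * (c2 * b) := by ring
      rw [this]
      exact Subring.mul_mem T hc1a hc2b
  constructor
  · intro hz
    obtain ⟨a, ha, b, hb, hb1, hab⟩ := (hωμ z).mp hz
    obtain ⟨ca, hcaT, hca1, hcaa⟩ := hclear a ha
    obtain ⟨cb, hcbT, hcb1, hcbb⟩ := hclear b hb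
    refine ⟨cb * (ca * a), Subring.mul_mem T hcbT hcaa,
      ca * (cb * b), Subring.mul_mem T hcaT hcbb, ?_, ?_⟩
    · rw [ω.map_mul, ω.map_mul, hca1, hcb1, hb1, one_mul, one_mul]
    · have h1 : ca * (cb * b) * z = cb * (ca * (b * z)) := by ring
      rw [h1, hab]
  · rintro ⟨a, ha, b, hb, hb1, hab⟩
    calc ω z = ω b * ω z := by rw [hb1, one_mul]
    _ = ω (b * z) := (ω.map_mul b z).symm
    _ = ω a := by rw [hab]
    _ ≤ 1 := hTle a ha
end

section
/- Let K ⊆ L' ⊆ L be finite extensions of fields, let ω be a valuation on L, with ω' its restriction to L' and ν its restriction to K. Suppose that O_{ω'} is essentially finitely generated over O_ν and that the integral closure D' of O_{ω'} in L is a finite O_{ω'}-module. Then O_ω is essentially finitely generated over O_ν. -/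
set_option synthInstance.maxHeartbeats 1000000
set_option maxHeartbeats 2000000

/-- A ring extension `f : A →+* B` is *essentially finitely generated* (essentially of
finite type) if there are `x₁, …, x_n ∈ B` such that `B = S⁻¹A[x₁,…,x_n]` for some
multiplicative set `S ⊆ A[x₁,…,x_n]`; equivalently, every `b ∈ B` can be written as
`a / c` with `a, c ∈ A[x₁,…,x_n]` and `c` invertible in `B`. -/
def IsEssentiallyFiniteType {A B : Type*} [CommRing A] [CommRing B] (f : A →+* B) : Prop :=
  ∃ (n : ℕ) (x : Fin n → B),
    ∀ b : B, ∃ a c : B,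
      a ∈ Subring.closure (Set.range ⇑f ∪ Set.range x) ∧
      c ∈ Subring.closure (Set.range ⇑f ∪ Set.range x) ∧
      IsUnit c ∧ c * b = a

section
variable (K L' L : Type*) [Field K] [Field L'] [Field L]
  [Algebra K L'] [Algebra L' L] [Algebra K L] [IsScalarTower K L' L]
  (Γ₀ : Type*) [LinearOrderedCommGroupWithZero Γ₀]

/-- The inclusion of valuation rings `O_ν → O_ω` induced by `K → L`, where
`ν = ω.comap (algebraMap K L)`. -/
def intMap (ω : Valuation L Γ₀) :
    (ω.comap (algebraMap K L)).integer →+* ω.integer :=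
  RingHom.codRestrict ((algebraMap K L).comp (Subring.subtype _)) ω.integer
    (fun x => x.2)

/-- The inclusion of valuation rings `O_ν → O_{ω'}` induced by `K → L'`, where
`ν = ω.comap (algebraMap K L)` and `ω' = ω.comap (algebraMap L' L)`. -/
def intMapMid (ω : Valuation L Γ₀) :
    (ω.comap (algebraMap K L)).integer →+* (ω.comap (algebraMap L' L)).integer :=
  RingHom.codRestrict ((algebraMap K L').comp (Subring.subtype _))
    (ω.comap (algebraMap L' L)).integer
    (fun x => by
      have hx : ω (algebraMap K L (x : K)) ≤ 1 := x.2
      rw [IsScalarTower.algebraMap_apply K L' L] at hx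
      exact hx)

/-- `L` as an algebra over the valuation ring `O_{ω'} ⊆ L'`. -/
noncomputable instance (ω : Valuation L Γ₀) :
    Algebra ↥(ω.comap (algebraMap L' L)).integer L :=
  ((algebraMap L' L).comp (Subring.subtype _)).toAlgebra

open Polynomial in
lemma prague_lc {R F : Type*} [CommRing R] [Field F] [Algebra R F] (b : F)
    (f : F[X]) (h : ∀ i, f.coeff i ∈ integralClosure R F) (hfz : f.eval b = 0) :
    f.leadingCoeff * b ∈ integralClosure R F := by
  set T : Subalgebra R F := integralClosure R F with hT
  set p : Polynomial ↥T := ∑ i ∈ f.support, monomial i (⟨f.coeff i, h i⟩ : ↥T) with hp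
  have hmapp : p.map (algebraMap ↥T F) = f := by
    ext n
    simp only [hp, Polynomial.map_sum, map_monomial, finset_sum_coeff, coeff_monomial,
      Finset.sum_ite_eq', mem_support_iff]
    split_ifs with hc
    · rfl
    · simp at hc
      simp [hc]
  have haev : aeval b p = 0 := by
    rw [aeval_def, eval₂_eq_eval_map, hmapp, hfz]
  have hinj : Function.Injective (algebraMap ↥T F) := Subtype.coe_injective
  have hlc : algebraMap ↥T F p.leadingCoeff = f.leadingCoeff := by
    rw [← hmapp, leadingCoeff_map_of_injective hinj]
  have := isIntegral_leadingCoeff_smul p b haev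
  rw [Algebra.smul_def, hlc] at this
  have h2 : f.leadingCoeff * b ∈ integralClosure ↥T F := this
  rw [integralClosure_idem, Algebra.mem_bot] at h2
  obtain ⟨y, hy⟩ := h2
  rw [← hy]
  exact y.2

open Polynomial in
lemma prague_tails {R F : Type*} [CommRing R] [Field F] [Algebra R F] (b : F) :
    ∀ (n : ℕ) (q : F[X]), q.natDegree ≤ n →
      (∀ i, ((X - C b) * q).coeff i ∈ integralClosure R F) →
      ∀ k, q.coeff k ∈ integralClosure R F ∧ b * q.coeff k ∈ integralClosure R F := by
  have const : ∀ s : F, (∀ i, ((X - C b) * C s).coeff i ∈ integralClosure R F) →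
      s ∈ integralClosure R F ∧ b * s ∈ integralClosure R F := by
    intro s h
    have e1 : ((X - C b) * C s).coeff 1 = s := by
      simp [sub_mul, coeff_X_mul]
    have e0 : ((X - C b) * C s).coeff 0 = -(b * s) := by
      simp [sub_mul, mul_coeff_zero, mul_comm]
    refine ⟨e1 ▸ h 1, ?_⟩
    have h0 := h 0
    rw [e0] at h0
    simpa using neg_mem h0
  intro n
  induction n with
  | zero =>
    intro q hq h k
    rw [Nat.le_zero] at hq
    have hqC : q = C (q.coeff 0) := q.eq_C_of_natDegree_eq_zero hq
    rcases Nat.eq_zero_or_pos k with rfl | hk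
    · rw [hqC] at h ⊢
      simpa using const _ h
    · have : q.coeff k = 0 := by
        rw [hqC]
        exact coeff_C_ne_zero (Nat.pos_iff_ne_zero.mp hk)
      rw [this]
      exact ⟨zero_mem _, by rw [mul_zero]; exact zero_mem _⟩
  | succ n ih =>
    intro q hq h k
    rcases le_or_gt q.natDegree n with h' | h'
    · exact ih q h' h k
    have hd : q.natDegree = n + 1 := le_antisymm hq h'
    have hq0 : q ≠ 0 := fun hh => by simp [hh] at hd
    set s := q.leadingCoeff with hs
    have hfd : ((X - C b) * q).natDegree = n + 2 := by
      rw [natDegree_mul (X_sub_C_ne_zero b) hq0, natDegree_X_sub_C, hd]; ring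
    have hflc : ((X - C b) * q).leadingCoeff = s := by
      rw [leadingCoeff_mul, leadingCoeff_X_sub_C, one_mul]
    have hsT : s ∈ integralClosure R F := by
      have := h (n + 2)
      rwa [← hfd, coeff_natDegree, hflc] at this
    have hbsT : b * s ∈ integralClosure R F := by
      have := prague_lc b ((X - C b) * q) h (by simp)
      rwa [hflc, mul_comm] at this
    -- erase the leading term
    have herase : ∀ i, ((X - C b) * q.eraseLead).coeff i ∈ integralClosure R F := by
      intro i
      have he : q.eraseLead = q - C s * X ^ q.natDegree :=
        eq_sub_of_add_eq q.eraseLead_add_C_mul_X_pow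
      have heq : (X - C b) * q.eraseLead
          = (X - C b) * q - (C s * X ^ (q.natDegree + 1) - C (b * s) * X ^ q.natDegree) := by
        rw [he, C_mul]; ring
      rw [heq, coeff_sub]
      refine sub_mem (h i) ?_
      rw [coeff_sub]
      refine sub_mem ?_ ?_ <;>
      · simp only [coeff_C_mul, coeff_X_pow, mul_ite, mul_one, mul_zero]
        split_ifs <;> simp [hsT, hbsT, zero_mem]
    have hih := ih q.eraseLead (by
      have := q.eraseLead_natDegree_le
      omega) herase
    rcases eq_or_ne k q.natDegree with rfl | hk
    · rw [coeff_natDegree]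
      exact ⟨hsT, hbsT⟩
    · have : q.eraseLead.coeff k = q.coeff k := eraseLead_coeff_of_ne k hk
      rw [← this]
      exact hih k

/-- Every element of the integral closure of `O_{ω'}` in `L` lies in `O_ω`. -/
lemma intCl_le_integer (ω : Valuation L Γ₀) {z : L}
    (hz : z ∈ integralClosure ↥(ω.comap (algebraMap L' L)).integer L) : ω z ≤ 1 := by
  obtain ⟨p, pm, pe⟩ := hz
  have hint : IsIntegral ↥ω.integer z := by
    refine ⟨p.map (RingHom.codRestrict ((algebraMap L' L).comp (Subring.subtype _)) ω.integer
      (fun a => a.2)), pm.map _, ?_⟩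
    rw [Polynomial.eval₂_map]
    exact pe
  exact (Valuation.integer.integers ω).mem_of_integral hint


open Polynomial in
/-- Key lemma: every element of `O_ω` is a ratio `a / c` of elements of the integral
closure `D'` of `O_{ω'}` in `L`, with `ω c = 1`. -/
lemma keyA [FiniteDimensional L' L] (ω : Valuation L Γ₀) {b : L} (hb : ω b ≤ 1) :
    ∃ c a : L, c ∈ integralClosure ↥(ω.comap (algebraMap L' L)).integer L ∧
      a ∈ integralClosure ↥(ω.comap (algebraMap L' L)).integer L ∧
      ω c = 1 ∧ c * b = a := by
  set T := integralClosure ↥(ω.comap (algebraMap L' L)).integer L with hT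
  by_cases hb0 : b = 0
  · exact ⟨1, 0, one_mem T, zero_mem T, map_one ω, by rw [hb0, mul_zero]⟩
  have hbi : IsIntegral L' b := IsIntegral.of_finite L' b
  have hf0 : minpoly L' b ≠ 0 := minpoly.ne_zero hbi
  set f := (minpoly L' b).map (algebraMap L' L) with hfdef
  have hf : f ≠ 0 := Polynomial.map_ne_zero hf0
  have hsupp : f.support.Nonempty := Polynomial.nonempty_support_iff.mpr hf
  obtain ⟨j, hj, hjmax⟩ := f.support.exists_max_image (fun i => ω (f.coeff i)) hsupp
  have hd0 : f.coeff j ≠ 0 := mem_support_iff.mp hj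
  have hωd : ω (f.coeff j) ≠ 0 := ω.ne_zero_iff.mpr hd0
  set g := Polynomial.C (f.coeff j)⁻¹ * f with hgdef
  have hgco : ∀ i, ω (g.coeff i) ≤ 1 := by
    intro i
    rw [hgdef, coeff_C_mul, map_mul, map_inv₀]
    by_cases hi : i ∈ f.support
    · calc (ω (f.coeff j))⁻¹ * ω (f.coeff i) ≤ (ω (f.coeff j))⁻¹ * ω (f.coeff j) :=
          mul_le_mul_right (hjmax i hi) _
        _ = 1 := inv_mul_cancel₀ hωd
    · rw [notMem_support_iff.mp hi]
      simp
  have hgj : g.coeff j = 1 := by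
    rw [hgdef, coeff_C_mul]
    exact inv_mul_cancel₀ hd0
  have hgmem : ∀ i, g.coeff i ∈ T := by
    intro i
    set e := ((minpoly L' b).coeff j)⁻¹ * (minpoly L' b).coeff i with hedef
    have he : algebraMap L' L e = g.coeff i := by
      rw [hedef, map_mul, map_inv₀, hgdef, coeff_C_mul, hfdef, coeff_map, coeff_map]
    have hemem : e ∈ (ω.comap (algebraMap L' L)).integer := by
      show ω (algebraMap L' L e) ≤ 1
      rw [he]
      exact hgco i
    have := Subalgebra.algebraMap_mem T (⟨e, hemem⟩ : ↥(ω.comap (algebraMap L' L)).integer)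
    rwa [show algebraMap ↥(ω.comap (algebraMap L' L)).integer L ⟨e, hemem⟩ = g.coeff i from he]
      at this
  have hgb : g.eval b = 0 := by
    rw [hgdef, eval_mul, hfdef, eval_map, ← Polynomial.aeval_def, minpoly.aeval, mul_zero]
  set q := g /ₘ (X - C b) with hqdef
  have hfac : (X - C b) * q = g := mul_divByMonic_eq_iff_isRoot.mpr hgb
  have hq := prague_tails b q.natDegree q le_rfl (fun i => by rw [hfac]; exact hgmem i)
  have hble : ∀ k, ω (q.coeff k) ≤ 1 := fun k => intCl_le_integer L' L Γ₀ ω (hq k).1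
  rcases j with _ | k
  · -- j = 0 : 1 = g.coeff 0 = -(b * q.coeff 0)
    have h0 : g.coeff 0 = -(b * q.coeff 0) := by
      rw [← hfac, sub_mul, coeff_sub, mul_coeff_zero, mul_coeff_zero]
      simp
    have hbq : b * q.coeff 0 = -1 := by
      rw [hgj] at h0
      rw [h0]; ring
    have h1le : (1 : Γ₀) ≤ ω (q.coeff 0) := by
      calc (1 : Γ₀) = ω (b * q.coeff 0) := by rw [hbq]; simp
        _ = ω b * ω (q.coeff 0) := map_mul ω _ _
        _ ≤ 1 * ω (q.coeff 0) := mul_le_mul_left hb _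
        _ = ω (q.coeff 0) := one_mul _
    exact ⟨q.coeff 0, q.coeff 0 * b, (hq 0).1, by rw [mul_comm]; exact (hq 0).2,
      le_antisymm (hble 0) h1le, rfl⟩
  · -- j = k + 1
    have hco : g.coeff (k + 1) = q.coeff k - b * q.coeff (k + 1) := by
      rw [← hfac, sub_mul, coeff_sub, coeff_X_mul, coeff_C_mul]
    have hle : (1 : Γ₀) ≤ max (ω (q.coeff k)) (ω (b * q.coeff (k + 1))) := by
      rw [show (1 : Γ₀) = ω (q.coeff k - b * q.coeff (k + 1)) by rw [← hco, hgj, map_one]]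
      exact ω.map_sub _ _
    rcases le_max_iff.mp hle with hcase | hcase
    · exact ⟨q.coeff k, q.coeff k * b, (hq k).1, by rw [mul_comm]; exact (hq k).2,
        le_antisymm (hble k) hcase, rfl⟩
    · have h1le : (1 : Γ₀) ≤ ω (q.coeff (k + 1)) := by
        calc (1 : Γ₀) ≤ ω (b * q.coeff (k + 1)) := hcase
          _ = ω b * ω (q.coeff (k + 1)) := map_mul ω _ _
          _ ≤ 1 * ω (q.coeff (k + 1)) := mul_le_mul_left hb _
          _ = ω (q.coeff (k + 1)) := one_mul _
      exact ⟨q.coeff (k + 1), q.coeff (k + 1) * b, (hq (k + 1)).1,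
        by rw [mul_comm]; exact (hq (k + 1)).2, le_antisymm (hble (k + 1)) h1le, rfl⟩


/-- Let `K ⊆ L' ⊆ L` be finite extensions of fields, `ω` a valuation
on `L`, `ω'` its restriction to `L'` and `ν` its restriction to `K`.  If `O_{ω'}` is
essentially finitely generated over `O_ν` and the integral closure `D'` of `O_{ω'}` in
`L` is a finite `O_{ω'}`-module, then `O_ω` is essentially finitely generated over
`O_ν`. -/
theorem stmt15 [FiniteDimensional K L'] [FiniteDimensional L' L]
    (ω : Valuation L Γ₀)
    (hefg : IsEssentiallyFiniteType (intMapMid K L' L Γ₀ ω))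
    (hD : Module.Finite ↥(ω.comap (algebraMap L' L)).integer
      ↥(integralClosure ↥(ω.comap (algebraMap L' L)).integer L)) :
    IsEssentiallyFiniteType (intMap K L Γ₀ ω) := by

  classical
  haveI := hD
  set A := (ω.comap (algebraMap L' L)).integer with hA
  set T := integralClosure ↥A L with hTdef
  set J : ↥A →+* ↥ω.integer :=
    RingHom.codRestrict ((algebraMap L' L).comp (Subring.subtype _)) ω.integer
      (fun a => a.2) with hJ
  obtain ⟨n, x, hx⟩ := hefg
  obtain ⟨m, y, hy⟩ := Module.Finite.exists_fin (R := ↥A) (M := ↥T)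
  set Y : Fin m → ↥ω.integer :=
    fun i => ⟨(y i : L), intCl_le_integer L' L Γ₀ ω (y i).2⟩ with hY
  set X : Fin (n + m) → ↥ω.integer := Fin.append (⇑J ∘ x) Y with hX
  refine ⟨n + m, X, ?_⟩
  intro b
  set R := Subring.closure (Set.range ⇑(intMap K L Γ₀ ω) ∪ Set.range X) with hR
  have F2 : ∀ s ∈ Subring.closure
      (Set.range ⇑(intMapMid K L' L Γ₀ ω) ∪ Set.range x), J s ∈ R := by
    intro s hs
    have h1 : J s ∈ (Subring.closure
        (Set.range ⇑(intMapMid K L' L Γ₀ ω) ∪ Set.range x)).map J :=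
      Subring.mem_map.mpr ⟨s, hs, rfl⟩
    rw [J.map_closure] at h1
    refine Subring.closure_mono ?_ h1
    rintro t ⟨u, hu, rfl⟩
    rcases hu with ⟨v, rfl⟩ | ⟨i, rfl⟩
    · exact Or.inl ⟨v, Subtype.ext (IsScalarTower.algebraMap_apply K L' L (v : K))⟩
    · exact Or.inr ⟨Fin.castAdd m i, Fin.append_left (⇑J ∘ x) Y i⟩
  have F3 : ∀ i, Y i ∈ R := fun i =>
    Subring.subset_closure (Or.inr ⟨Fin.natAdd n i, Fin.append_right (⇑J ∘ x) Y i⟩)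
  have hspan : ∀ (c : L) (hc : c ∈ T),
      ∃ s : Fin m → ↥A, (∑ i, algebraMap L' L ↑(s i) * (y i : L)) = c := by
    intro c hc
    have hctop : (⟨c, hc⟩ : ↥T) ∈ Submodule.span ↥A (Set.range y) := by
      rw [hy]; trivial
    obtain ⟨s, hs⟩ := (Submodule.mem_span_range_iff_exists_fun ↥A).1 hctop
    refine ⟨s, ?_⟩
    have := congrArg (Subtype.val) hs
    rw [AddSubmonoidClass.coe_finset_sum] at this
    simp [Algebra.smul_def] at this
    exact this
  obtain ⟨c, a, hcT, haT, hc1, hca⟩ := keyA L' L Γ₀ ω b.2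
  obtain ⟨s, hs⟩ := hspan c hcT
  obtain ⟨t, ht⟩ := hspan a haT
  choose ps qs hps hqs hqu hqe using fun i => hx (s i)
  choose pt qt hpt hqt htu hte using fun i => hx (t i)
  set Q : ↥A := (∏ i, qs i) * ∏ i, qt i with hQ
  have hQu : IsUnit Q := by
    refine IsUnit.mul ?_ ?_ <;>
      exact Finset.prod_induction _ IsUnit (fun u v hu hv => hu.mul hv) isUnit_one
        (fun i _ => by first | exact hqu i | exact htu i)
  have hQmem : ∀ (w : Fin m → ↥A) (pw qw : Fin m → ↥A)
      (_ : ∀ i, pw i ∈ Subring.closure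
        (Set.range ⇑(intMapMid K L' L Γ₀ ω) ∪ Set.range x))
      (_ : ∀ i, qw i ∈ Subring.closure
        (Set.range ⇑(intMapMid K L' L Γ₀ ω) ∪ Set.range x))
      (_ : ∀ i, qw i * w i = pw i) (P : ↥A) (_ : P ∈ Subring.closure
        (Set.range ⇑(intMapMid K L' L Γ₀ ω) ∪ Set.range x))
      (i : Fin m), (P * ∏ j, qw j) * w i ∈ Subring.closure
        (Set.range ⇑(intMapMid K L' L Γ₀ ω) ∪ Set.range x) := by
    intro w pw qw hpw hqw hwe P hP i
    have e1 : (∏ j, qw j) = qw i * ∏ j ∈ Finset.univ.erase i, qw j :=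
      (Finset.mul_prod_erase _ _ (Finset.mem_univ i)).symm
    have e2 : (P * ∏ j, qw j) * w i = P * (∏ j ∈ Finset.univ.erase i, qw j) * pw i := by
      rw [e1, ← hwe i]; ring
    rw [e2]
    exact Subring.mul_mem _ (Subring.mul_mem _ hP
      (prod_mem (fun j _ => hqw j))) (hpw i)
  have hQs : ∀ i, Q * s i ∈ Subring.closure
      (Set.range ⇑(intMapMid K L' L Γ₀ ω) ∪ Set.range x) := by
    intro i
    have := hQmem s ps qs hps hqs hqe (∏ j, qt j)
      (prod_mem (fun j _ => hqt j)) i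
    rwa [show Q = (∏ j, qt j) * ∏ j, qs j by rw [hQ]; ring] 
  have hQt : ∀ i, Q * t i ∈ Subring.closure
      (Set.range ⇑(intMapMid K L' L Γ₀ ω) ∪ Set.range x) := by
    intro i
    have := hQmem t pt qt hpt hqt hte (∏ j, qs j)
      (prod_mem (fun j _ => hqs j)) i
    rwa [hQ]
  set cO : ↥ω.integer := J Q * ⟨c, le_of_eq hc1⟩ with hcO
  set aO : ↥ω.integer := J Q * ⟨a, intCl_le_integer L' L Γ₀ ω haT⟩ with haO
  have hsum : ∀ (z : L) (hz : ω z ≤ 1) (u : Fin m → ↥A)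
      (_ : ∀ i, Q * u i ∈ Subring.closure
        (Set.range ⇑(intMapMid K L' L Γ₀ ω) ∪ Set.range x))
      (_ : (∑ i, algebraMap L' L ↑(u i) * (y i : L)) = z),
      J Q * (⟨z, hz⟩ : ↥ω.integer) ∈ R := by
    intro z hz u hu huz
    have he : J Q * (⟨z, hz⟩ : ↥ω.integer) = ∑ i, J (Q * u i) * Y i := by
      apply Subtype.ext
      rw [AddSubmonoidClass.coe_finset_sum]
      show algebraMap L' L ↑Q * z = _
      rw [← huz, Finset.mul_sum]
      refine Finset.sum_congr rfl fun i _ => ?_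
      show algebraMap L' L ↑Q * (algebraMap L' L ↑(u i) * (y i : L))
        = algebraMap L' L (↑Q * ↑(u i)) * (y i : L)
      rw [map_mul]; ring
    rw [he]
    exact sum_mem fun i _ => Subring.mul_mem _ (F2 _ (hu i)) (F3 i)
  have hcR : cO ∈ R := hsum c (le_of_eq hc1) s hQs hs
  have haR : aO ∈ R := hsum a (intCl_le_integer L' L Γ₀ ω haT) t hQt ht
  have hQ1 : ω (algebraMap L' L ↑Q) = 1 :=
    (Valuation.integer.integers (ω.comap (algebraMap L' L))).one_of_isUnit hQu
  have hcu : IsUnit cO := by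
    refine (Valuation.integer.integers ω).isUnit_of_one' ?_
    show ω ((algebraMap L' L ↑Q) * c) = 1
    rw [map_mul, hQ1, hc1, one_mul]
  refine ⟨aO, cO, haR, hcR, hcu, ?_⟩
  apply Subtype.ext
  show (algebraMap L' L ↑Q * c) * (b : L) = algebraMap L' L ↑Q * a
  rw [mul_assoc, hca]
end
end

section
/- Let Γ be a linearly ordered abelian group and Δ a subgroup of Γ of finite index e = (Γ : Δ), and suppose 1 < ε(Γ|Δ) = e. Then: (a) Γ has a least positive element γ₁ and the smallest nonzero convex subgroup Γ₁ of Γ equals ℤ·γ₁ and is isomorphic to ℤ; (b) Γ = Δ + Γ₁, i.e. the induced map (Γ/Γ₁)/((Δ+Γ₁)/Γ₁) is the zero group; and (c) the inclusion Γ₁ → Γ induces an isomorphism Γ₁/(Δ ∩ Γ₁) ≅ Γ/Δ, and both groups are cyclic of order e, i.e. isomorphic to ℤ/eℤ. -/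
open Function

private lemma stmt16_discrete {Γ : Type*} [AddCommGroup Γ] [LinearOrder Γ] [IsOrderedAddMonoid Γ] {γ₁ : Γ}
    (hL : IsLeast {γ : Γ | 0 < γ} γ₁) :
    ∀ n : ℕ, ∀ g : Γ, 0 ≤ g → g ≤ n • γ₁ → ∃ k : ℕ, k ≤ n ∧ g = k • γ₁ := by
  intro n
  induction n with
  | zero =>
    intro g h0 hle
    exact ⟨0, le_refl 0, le_antisymm (by simpa using hle) (by simpa using h0)⟩
  | succ n ih =>
    intro g h0 hle
    by_cases h : g ≤ n • γ₁
    · obtain ⟨k, hk, rfl⟩ := ih g h0 h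
      exact ⟨k, hk.trans n.le_succ, rfl⟩
    · push_neg at h
      have h1 : 0 < g - n • γ₁ := sub_pos.2 h
      have h2 : γ₁ ≤ g - n • γ₁ := hL.2 h1
      have h3 : g - n • γ₁ ≤ γ₁ := by
        have hle' : g ≤ γ₁ + n • γ₁ := by rw [succ_nsmul] at hle; rw [add_comm]; exact hle
        exact sub_le_iff_le_add.2 hle'
      have h4 : g - n • γ₁ = γ₁ := le_antisymm h3 h2
      refine ⟨n + 1, le_refl _, ?_⟩
      rw [succ_nsmul]
      exact (sub_eq_iff_eq_add.mp h4).trans (add_comm _ _)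


/-- Let `Δ ≤ Γ` be of finite index `e = (Γ : Δ)` with
`1 < ε(Γ|Δ) = e`.  Then:
(a) `Γ` has a least positive element `γ₁`, and `ℤ·γ₁` is the smallest nonzero convex
subgroup of `Γ` and is isomorphic to `ℤ`;
(b) `Γ = Δ + ℤ·γ₁`;
(c) the inclusion `ℤ·γ₁ → Γ` induces an isomorphism `ℤ·γ₁/(Δ ∩ ℤ·γ₁) ≅ Γ/Δ`, and both
groups are cyclic of order `e`. -/
theorem stmt16 (Γ : Type*) [AddCommGroup Γ] [LinearOrder Γ] [IsOrderedAddMonoid Γ] (Δ : AddSubgroup Γ)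
    (e : ℕ) (he : e = Δ.index) (hΔ : Δ.index ≠ 0)
    (hε : ({γ : Γ | 0 ≤ γ ∧ ∀ δ ∈ Δ, 0 < δ → γ < δ}).ncard = e)
    (hgt : 1 < e) :
    ∃ γ₁ : Γ, IsLeast {γ : Γ | 0 < γ} γ₁ ∧
      -- (a) `ℤ·γ₁` is convex, it is contained in every nonzero convex subgroup,
      --     and it is isomorphic to `ℤ`
      (∀ g h₁ h₂ : Γ, h₁ ∈ AddSubgroup.zmultiples γ₁ → h₂ ∈ AddSubgroup.zmultiples γ₁ →
        h₁ ≤ g → g ≤ h₂ → g ∈ AddSubgroup.zmultiples γ₁) ∧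
      (∀ H : AddSubgroup Γ,
        (∀ g h₁ h₂ : Γ, h₁ ∈ H → h₂ ∈ H → h₁ ≤ g → g ≤ h₂ → g ∈ H) → H ≠ ⊥ →
        AddSubgroup.zmultiples γ₁ ≤ H) ∧
      Nonempty (AddSubgroup.zmultiples γ₁ ≃+ ℤ) ∧
      -- (b) `Γ = Δ + ℤ·γ₁`
      Δ ⊔ AddSubgroup.zmultiples γ₁ = ⊤ ∧
      -- (c) the induced map `ℤ·γ₁/(Δ ∩ ℤ·γ₁) → Γ/Δ` is an isomorphism and both groups
      --     are cyclic of order `e`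
      Function.Bijective
        (QuotientAddGroup.map
          ((Δ ⊓ AddSubgroup.zmultiples γ₁).addSubgroupOf (AddSubgroup.zmultiples γ₁)) Δ
          (AddSubgroup.zmultiples γ₁).subtype (fun x hx => hx.1)) ∧
      Nonempty ((Γ ⧸ Δ) ≃+ ZMod e) ∧
      Nonempty ((↥(AddSubgroup.zmultiples γ₁) ⧸
        (Δ ⊓ AddSubgroup.zmultiples γ₁).addSubgroupOf (AddSubgroup.zmultiples γ₁)) ≃+
          ZMod e) := by
  classical
  set S : Set Γ := {γ : Γ | 0 ≤ γ ∧ ∀ δ ∈ Δ, 0 < δ → γ < δ} with hSdef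
  have hSfin : S.Finite := by
    by_contra h
    have h' : S.Infinite := h
    rw [h'.ncard] at hε
    omega
  have h0S : (0 : Γ) ∈ S := ⟨le_refl 0, fun δ _ h => h⟩
  -- S has a positive element
  have hpos : ∃ s ∈ S, 0 < s := by
    have h1 : 1 < S.ncard := by rw [hε]; exact hgt
    obtain ⟨b, hb, hb0⟩ := Set.exists_ne_of_one_lt_ncard h1 0
    exact ⟨b, hb, lt_of_le_of_ne hb.1 (Ne.symm hb0)⟩
  -- least positive element of S
  obtain ⟨γ₁, ⟨hγ₁S, hγ₁pos⟩, hminS⟩ :=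
    Set.exists_min_image {x ∈ S | 0 < x} id (hSfin.subset (Set.sep_subset _ _))
      (by obtain ⟨s, hs, hs0⟩ := hpos; exact ⟨s, hs, hs0⟩)
  have hL : IsLeast {γ : Γ | 0 < γ} γ₁ := by
    refine ⟨hγ₁pos, fun g hg => ?_⟩
    by_cases hgS : g ∈ S
    · exact hminS g ⟨hgS, hg⟩
    · rw [hSdef, Set.mem_setOf_eq] at hgS
      push_neg at hgS
      obtain ⟨δ, hδ, hδpos, hδle⟩ := hgS (le_of_lt hg)
      exact le_of_lt (lt_of_lt_of_le (hγ₁S.2 δ hδ hδpos) hδle)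
  -- every element of S is a natural multiple of γ₁
  have hSmul : ∀ s ∈ S, ∃ k : ℕ, s = k • γ₁ := by
    intro s hs
    have hbd : ∃ n : ℕ, s ≤ n • γ₁ := by
      by_contra h
      push_neg at h
      refine (Set.infinite_of_injective_forall_mem
        (f := fun n : ℕ => s - n • γ₁) ?_ ?_) hSfin
      · intro m n hmn
        simp only [sub_right_inj] at hmn
        have : (m : ℤ) • γ₁ = (n : ℤ) • γ₁ := by
          rw [natCast_zsmul, natCast_zsmul]; exact hmn
        exact Nat.cast_injective ((zsmul_left_strictMono hγ₁pos).injective this)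
      · intro n
        refine ⟨sub_nonneg.2 (le_of_lt (h n)), fun δ hδ hδp => ?_⟩
        exact lt_of_le_of_lt (sub_le_self s (nsmul_nonneg (le_of_lt hγ₁pos) n))
          (hs.2 δ hδ hδp)
    obtain ⟨n, hn⟩ := hbd
    obtain ⟨k, _, hk⟩ := stmt16_discrete hL n s hs.1 hn
    exact ⟨k, hk⟩
  have hsmulmono : StrictMono (fun k : ℕ => k • γ₁) := by
    intro m n hmn
    have : (m : ℤ) • γ₁ < (n : ℤ) • γ₁ :=
      zsmul_left_strictMono hγ₁pos (by exact_mod_cast hmn)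
    simpa [natCast_zsmul] using this
  set T : Set ℕ := {k : ℕ | k • γ₁ ∈ S} with hTdef
  have hdown : ∀ j k : ℕ, j ≤ k → k ∈ T → j ∈ T := by
    intro j k hjk hk
    refine ⟨nsmul_nonneg (le_of_lt hγ₁pos) j, fun δ hδ hδp => ?_⟩
    exact lt_of_le_of_lt (hsmulmono.monotone (by exact_mod_cast hjk) :
      j • γ₁ ≤ k • γ₁) (hk.2 δ hδ hδp)
  have hTimg : (fun k : ℕ => k • γ₁) '' T = S := by
    apply Set.Subset.antisymm
    · rintro _ ⟨k, hk, rfl⟩; exact hk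
    · intro s hs
      obtain ⟨k, rfl⟩ := hSmul s hs
      exact ⟨k, hs, rfl⟩
  have hTfin : T.Finite :=
    Set.Finite.of_finite_image (hTimg ▸ hSfin) (hsmulmono.injective.injOn)
  have hTcard : T.ncard = e := by
    rw [← hε, ← hTimg, Set.ncard_image_of_injective _ hsmulmono.injective]
  have hT_lt_e : ∀ k ∈ T, k < e := by
    intro k hk
    have hsub : Set.Iic k ⊆ T := fun j hj => hdown j k hj hk
    have : (Set.Iic k).ncard ≤ T.ncard := Set.ncard_le_ncard hsub hTfin
    have hIic : (Set.Iic k).ncard = k + 1 := by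
      rw [← Finset.coe_Iic, Set.ncard_coe_finset, Nat.card_Iic]
    omega
  have hT_full : ∀ k, k < e → k ∈ T := by
    intro k hk
    by_contra hkT
    have hsub : T ⊆ Set.Iio k := by
      intro j hj
      rw [Set.mem_Iio]
      by_contra hjk
      push_neg at hjk
      exact hkT (hdown k j hjk hj)
    have : T.ncard ≤ (Set.Iio k).ncard := Set.ncard_le_ncard hsub (Set.finite_Iio k)
    have hIio : (Set.Iio k).ncard = k := by
      rw [← Finset.coe_Iio, Set.ncard_coe_finset, Nat.card_Iio]
    omega
  -- e • γ₁ ∈ Δ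
  have heΔ : e • γ₁ ∈ Δ := by
    have heT : e ∉ T := fun h => lt_irrefl e (hT_lt_e e h)
    rw [hTdef, Set.mem_setOf_eq, hSdef, Set.mem_setOf_eq] at heT
    push_neg at heT
    obtain ⟨δ, hδ, hδp, hδle⟩ := heT (nsmul_nonneg (le_of_lt hγ₁pos) e)
    obtain ⟨j, hje, hj⟩ := stmt16_discrete hL e δ (le_of_lt hδp) hδle
    have hj1 : e - 1 < j := by
      by_contra hj1
      push_neg at hj1
      have h1 : (e - 1) ∈ T := hT_full (e - 1) (by omega)
      have := h1.2 δ hδ hδp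
      rw [hj] at this
      exact absurd (hsmulmono.monotone hj1) (not_le_of_gt this)
    have : j = e := by omega
    rw [this] at hj
    rwa [← hj]
  have hnotΔ : ∀ k : ℕ, 0 < k → k < e → k • γ₁ ∉ Δ := by
    intro k hk0 hke hkΔ
    have hkS : k • γ₁ ∈ S := hT_full k hke
    have : (0 : ℕ) • γ₁ < k • γ₁ := hsmulmono hk0
    rw [zero_smul] at this
    exact lt_irrefl _ (hkS.2 (k • γ₁) hkΔ this)
  have hdvd : ∀ m : ℤ, m • γ₁ ∈ Δ ↔ (e : ℤ) ∣ m := by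
    intro m
    constructor
    · intro hm
      have hq : ((e : ℤ) * (m / e)) • γ₁ ∈ Δ := by
        rw [mul_comm, mul_zsmul, natCast_zsmul]
        exact AddSubgroup.zsmul_mem Δ heΔ _
      have hr : (m % e) • γ₁ ∈ Δ := by
        have : m % e = m - (e : ℤ) * (m / e) := by
          rw [Int.emod_def]
        rw [this, sub_zsmul]
        exact add_mem hm (neg_mem hq)
      have hr0 : 0 ≤ m % e := Int.emod_nonneg m (by exact_mod_cast (by omega : e ≠ 0))
      have hrlt : m % e < e := Int.emod_lt_of_pos m (by exact_mod_cast (by omega : 0 < e))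
      rcases eq_or_lt_of_le hr0 with h0 | h0
      · exact Int.dvd_of_emod_eq_zero h0.symm
      · exfalso
        have hnn : (m % e).toNat • γ₁ ∈ Δ := by
          rw [← natCast_zsmul, Int.toNat_of_nonneg hr0]
          exact hr
        refine hnotΔ (m % e).toNat (by omega) (by omega) hnn
    · rintro ⟨c, rfl⟩
      rw [mul_comm, mul_zsmul, natCast_zsmul]
      exact AddSubgroup.zsmul_mem Δ heΔ _
  -- convexity of ℤ·γ₁
  have hconv : ∀ g h₁ h₂ : Γ, h₁ ∈ AddSubgroup.zmultiples γ₁ →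
      h₂ ∈ AddSubgroup.zmultiples γ₁ → h₁ ≤ g → g ≤ h₂ →
      g ∈ AddSubgroup.zmultiples γ₁ := by
    rintro g h₁ h₂ ⟨a, rfl⟩ ⟨b, rfl⟩ hag hgb
    simp only at hag hgb
    have hab : a ≤ b := by
      by_contra hba
      push_neg at hba
      exact absurd (hag.trans hgb) (not_le_of_gt (zsmul_left_strictMono hγ₁pos hba))
    have h0 : (0 : Γ) ≤ g - a • γ₁ := sub_nonneg.2 hag
    have hbd : g - a • γ₁ ≤ (b - a).toNat • γ₁ := by
      rw [← natCast_zsmul, Int.toNat_of_nonneg (sub_nonneg.2 hab), sub_zsmul]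
      have := sub_le_sub_right hgb (a • γ₁)
      simpa [sub_eq_add_neg] using this
    obtain ⟨k, _, hk⟩ := stmt16_discrete hL _ _ h0 hbd
    refine ⟨a + k, ?_⟩
    have : g = a • γ₁ + (k : ℤ) • γ₁ := by
      rw [natCast_zsmul, ← hk]
      abel
    simp only [add_zsmul]
    rw [← this]
  -- smallest nonzero convex subgroup
  have hmin : ∀ H : AddSubgroup Γ,
      (∀ g h₁ h₂ : Γ, h₁ ∈ H → h₂ ∈ H → h₁ ≤ g → g ≤ h₂ → g ∈ H) → H ≠ ⊥ →
      AddSubgroup.zmultiples γ₁ ≤ H := by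
    intro H hHconv hHbot
    obtain ⟨x, hxH, hx0⟩ : ∃ x ∈ H, x ≠ 0 := by
      by_contra h
      push_neg at h
      refine hHbot ?_
      ext y
      simp only [AddSubgroup.mem_bot]
      exact ⟨fun hy => h y hy, fun hy => hy ▸ H.zero_mem⟩
    have hγ₁H : γ₁ ∈ H := by
      rcases lt_or_gt_of_ne hx0 with hneg | hpos'
      · exact hHconv γ₁ x (-x) hxH (H.neg_mem hxH) (le_of_lt (hneg.trans hγ₁pos))
          (hL.2 (neg_pos.2 hneg))
      · exact hHconv γ₁ 0 x H.zero_mem hxH (le_of_lt hγ₁pos) (hL.2 hpos')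
    rintro _ ⟨m, rfl⟩
    exact AddSubgroup.zsmul_mem H hγ₁H m
  -- ℤ·γ₁ ≃+ ℤ
  have hinjz : Function.Injective (zmultiplesHom Γ γ₁) := by
    intro m n hmn
    exact (zsmul_left_strictMono hγ₁pos).injective (by simpa using hmn)
  have hrange : (zmultiplesHom Γ γ₁).range = AddSubgroup.zmultiples γ₁ := by
    ext x
    simp [AddMonoidHom.mem_range, AddSubgroup.mem_zmultiples_iff]
  have hziso : Nonempty (AddSubgroup.zmultiples γ₁ ≃+ ℤ) := by
    have := AddMonoidHom.ofInjective hinjz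
    rw [hrange] at this
    exact ⟨this.symm⟩
  -- the quotient map machinery
  haveI : NeZero e := ⟨by omega⟩
  have hne : e ≠ 0 := by omega
  set φ : ℤ →+ Γ ⧸ Δ := (QuotientAddGroup.mk' Δ).comp (zmultiplesHom Γ γ₁) with hφdef
  have hφ : ∀ m : ℤ, φ m = QuotientAddGroup.mk (m • γ₁) := fun m => rfl
  have hφ0 : ∀ m : ℤ, φ m = 0 ↔ m • γ₁ ∈ Δ := by
    intro m
    rw [hφ m]
    exact QuotientAddGroup.eq_zero_iff _
  have hφe : φ (e : ℤ) = 0 := (hφ0 _).2 (by rw [natCast_zsmul]; exact heΔ)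
  set ψ : ZMod e →+ Γ ⧸ Δ := ZMod.lift e ⟨φ, hφe⟩ with hψdef
  have hψcoe : ∀ m : ℤ, ψ (m : ZMod e) = φ m := fun m => ZMod.lift_coe e ⟨φ, hφe⟩ m
  have hψinj : Function.Injective ψ := by
    rw [hψdef]
    rw [ZMod.lift_injective]
    intro m hm
    rw [ZMod.intCast_zmod_eq_zero_iff_dvd]
    exact (hdvd m).1 ((hφ0 m).1 hm)
  haveI hQfin : Finite (Γ ⧸ Δ) := by
    refine Nat.finite_of_card_ne_zero ?_
    rw [← AddSubgroup.index_eq_card]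
    exact hΔ
  have hQcard : Nat.card (Γ ⧸ Δ) = e := by
    rw [← AddSubgroup.index_eq_card, ← he]
  have hψbij : Function.Bijective ψ := by
    rw [Nat.bijective_iff_injective_and_card]
    exact ⟨hψinj, by rw [Nat.card_zmod, hQcard]⟩
  have hQiso : Nonempty ((Γ ⧸ Δ) ≃+ ZMod e) := ⟨(AddEquiv.ofBijective ψ hψbij).symm⟩
  -- (b)
  have hsup : Δ ⊔ AddSubgroup.zmultiples γ₁ = ⊤ := by
    rw [eq_top_iff]
    intro g _
    obtain ⟨z, hz⟩ := hψbij.2 (QuotientAddGroup.mk g)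
    obtain ⟨m, rfl⟩ := ZMod.intCast_surjective z
    rw [hψcoe, hφ] at hz
    have hd : -(m • γ₁) + g ∈ Δ := QuotientAddGroup.eq.1 hz
    have : g = (-(m • γ₁) + g) + m • γ₁ := by abel
    rw [this]
    exact AddSubgroup.add_mem _
      (AddSubgroup.mem_sup_left hd)
      (AddSubgroup.mem_sup_right ⟨m, rfl⟩)
  -- (c)
  set Φ := QuotientAddGroup.map
      ((Δ ⊓ AddSubgroup.zmultiples γ₁).addSubgroupOf (AddSubgroup.zmultiples γ₁)) Δ
      (AddSubgroup.zmultiples γ₁).subtype (fun x hx => hx.1) with hΦdef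
  have hΦbij : Function.Bijective Φ := by
    constructor
    · intro a b
      refine QuotientAddGroup.induction_on a fun x =>
        QuotientAddGroup.induction_on b fun y => ?_
      intro hxy
      change (QuotientAddGroup.mk (x : Γ) : Γ ⧸ Δ) = QuotientAddGroup.mk (y : Γ) at hxy
      rw [QuotientAddGroup.eq] at hxy ⊢
      rw [AddSubgroup.mem_addSubgroupOf, AddSubgroup.mem_inf]
      refine ⟨?_, (-x + y).2⟩
      simpa using hxy
    · intro q
      refine QuotientAddGroup.induction_on q fun g => ?_
      have hg : g ∈ Δ ⊔ AddSubgroup.zmultiples γ₁ := by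
        rw [hsup]; trivial
      rw [AddSubgroup.mem_sup] at hg
      obtain ⟨d, hd, z, hz, rfl⟩ := hg
      refine ⟨QuotientAddGroup.mk ⟨z, hz⟩, ?_⟩
      change (QuotientAddGroup.mk z : Γ ⧸ Δ) = QuotientAddGroup.mk (d + z)
      rw [QuotientAddGroup.eq]
      simpa using hd
  exact ⟨γ₁, hL, hconv, hmin, hziso, hsup, hΦbij, hQiso,
    ⟨(AddEquiv.ofBijective Φ hΦbij).trans (AddEquiv.ofBijective ψ hψbij).symm⟩⟩
end
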